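/- arXiv:1109.0046 — 10 statements merged into one kernel-verified Lean document; each statement's English description precedes it below -/
import Mathlib

section
/- For every integer n ≥ 1, the following identity holds in the polynomial ring F_2[t_1,…,t_n]: the product, taken over all subsets S ⊆ {1,…,n} of odd cardinality, of the linear forms Σ_{i∈S} t_i, equals P_n. (This is the paper's key combinatorial Lemma: ∏_{k odd} m_k = Σ_{2^{e_1}+⋯+2^{e_n}=2^{n−1}} t_1^{2^{e_1}} ⋯ t_n^{2^{e_n}}, where m_k = ∏_{1≤i_1<⋯<i_k≤n} (t_{i_1}+⋯+t_{i_k}).) -/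
open MvPolynomial

/-- `P n` is the sum, over all `n`-tuples `(e 1, …, e n)` of nonnegative integers with
`2^(e 1) + ⋯ + 2^(e n) = 2^(n-1)`, of the monomials `t 1^(2^(e 1)) ⋯ t n^(2^(e n))`
in `F₂[t 1, …, t n]`. -/
noncomputable def P (n : ℕ) : MvPolynomial (Fin n) (ZMod 2) :=
  ∑ᶠ e : Fin n → ℕ,
    if (∑ i, 2 ^ e i) = 2 ^ (n - 1) then ∏ i, X i ^ 2 ^ e i else 0

/-!
Induct on the number of variables, reading a polynomial in `t₀, t₁, …, tₙ` as a polynomial in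
`t₀` over `F₂[t₁, …, tₙ]`, and write `ℓ_T = ∑_{i ∈ T} t_i`.

An odd subset of `{0, …, n}` is either an odd `T ⊆ {1, …, n}` or `{0} ∪ T` with `T` even, so the
product side becomes `(∏_{T odd} ℓ_T) · ∏_{T even} (t₀ + ℓ_T)`.

On the other side, `P_{n+1}` has degree `2^(n-1)` in `t₀` with leading coefficient `P_n`, and all
its `t₀`-exponents are powers of two, so it is additive in `t₀`. Substituting `t₀ = t_i`, the
involution exchanging `e₀` and `e_i` cancels every term except those with `e₀ = e_i`, and these
merge into the solutions of `∑ 2^(e_k) = 2^n` in `t₁, …, tₙ` (none has `e_i = 0`, because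
`2^n - 1` is not a sum of fewer than `n` powers of two). The value is independent of `i`, so by
additivity `P_{n+1}` vanishes at `t₀ = ℓ_T` for each of the `2^(n-1)` even `T`. These roots are
distinct, which forces `P_{n+1} = P_n · ∏_{T even} (t₀ + ℓ_T)`.
-/

open Finset

theorem Multiset.sum_map_two_pow_of_zero_notMem {s : Multiset ℕ} (hs : 0 ∉ s) :
    (s.map (2 ^ ·)).sum = 2 * (s.map fun a => 2 ^ (a - 1)).sum := by
  rw [← Multiset.sum_map_mul_left]
  refine congrArg Multiset.sum (Multiset.map_congr rfl fun a ha => ?_)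
  rw [← pow_succ', Nat.sub_add_cancel (Nat.pos_of_ne_zero (ne_of_mem_of_not_mem ha hs))]

theorem Multiset.le_card_of_sum_map_two_pow_eq_two_pow_sub_one (s : Multiset ℕ) {m : ℕ}
    (h : (s.map (2 ^ ·)).sum = 2 ^ m - 1) : m ≤ Multiset.card s := by
  induction hs : Multiset.card s using Nat.strong_induction_on generalizing s m with
  | _ c ih =>
  obtain rfl | hm := Nat.eq_zero_or_pos m
  · exact Nat.zero_le c
  have hpow : 2 ^ m = 2 * 2 ^ (m - 1) := by rw [← pow_succ', Nat.sub_add_cancel hm]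
  have hpos : 1 ≤ 2 ^ (m - 1) := Nat.one_le_two_pow
  have h0 : 0 ∈ s := by
    by_contra h0
    rw [Multiset.sum_map_two_pow_of_zero_notMem h0] at h
    omega
  obtain ⟨t, rfl⟩ := Multiset.exists_cons_of_mem h0
  rw [Multiset.card_cons] at hs
  rw [Multiset.map_cons, Multiset.sum_cons, pow_zero] at h
  by_cases h00 : 0 ∈ t
  · -- merge `2 ^ 0 + 2 ^ 0` into `2 ^ 1`
    obtain ⟨u, rfl⟩ := Multiset.exists_cons_of_mem h00
    rw [Multiset.map_cons, Multiset.sum_cons, pow_zero] at h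
    rw [Multiset.card_cons] at hs
    have hsum : ((1 ::ₘ u).map (2 ^ ·)).sum = 2 ^ m - 1 := by
      rw [Multiset.map_cons, Multiset.sum_cons, pow_one]; omega
    have := ih (c - 1) (by omega) _ hsum (by rw [Multiset.card_cons]; omega)
    omega
  · -- drop the single `2 ^ 0` and halve the rest
    rw [Multiset.sum_map_two_pow_of_zero_notMem h00] at h
    have hsum : ((t.map (· - 1)).map (2 ^ ·)).sum = 2 ^ (m - 1) - 1 := by
      rw [Multiset.map_map]
      exact (by omega : (t.map fun a => 2 ^ (a - 1)).sum = 2 ^ (m - 1) - 1)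
    have := ih (c - 1) (by omega) _ hsum (by rw [Multiset.card_map]; omega)
    omega

theorem ne_zero_of_sum_two_pow_eq_two_pow {ι : Type*} [Fintype ι] [DecidableEq ι] {e : ι → ℕ}
    {m : ℕ} (hcard : Fintype.card ι ≤ m) (h : ∑ k, 2 ^ e k = 2 ^ m) (i : ι) : e i ≠ 0 := by
  intro hi
  rw [← add_sum_erase _ _ (mem_univ i), hi, pow_zero] at h
  have hle := Multiset.le_card_of_sum_map_two_pow_eq_two_pow_sub_one
    ((univ.erase i).val.map e) (m := m)
    (by rw [Multiset.map_map]; exact (by omega : ∑ k ∈ univ.erase i, 2 ^ e k = 2 ^ m - 1))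
  rw [Multiset.card_map, card_val, card_erase_of_mem (mem_univ i), card_univ] at hle
  have : 0 < Fintype.card ι := Fintype.card_pos_iff.mpr ⟨i⟩
  omega

@[to_additive]
theorem Fintype.prod_apply_update {ι α M : Type*} [Fintype ι] [DecidableEq ι] [CommMonoid M]
    (F : ι → α → M) (g : ι → α) (i : ι) (c : α) :
    ∏ k, F k (Function.update g i c k) = F i c * ∏ k ∈ univ.erase i, F k (g k) := by
  simp_rw [Function.apply_update F g i c]
  rw [prod_update_of_mem (mem_univ i), sdiff_singleton_eq_erase]

@[to_additive]
theorem Fin.prod_finset_succ {M : Type*} [CommMonoid M] {m : ℕ} (f : Finset (Fin (m + 1)) → M) :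
    ∏ S, f S = ∏ T : Finset (Fin m), f (T.image Fin.succ) * f (insert 0 (T.image Fin.succ)) := by
  have huniv : (univ : Finset (Fin (m + 1))) = insert 0 (univ.image Fin.succ) := by
    rw [Fin.univ_succ, cons_eq_insert, map_eq_image]; rfl
  have hinj : Set.InjOn (image Fin.succ)
      ((univ : Finset (Fin m)).powerset : Set (Finset (Fin m))) :=
    (image_injective (Fin.succ_injective m)).injOn
  rw [← powerset_univ, huniv, prod_powerset_insert (by simp), powerset_image, prod_image hinj,
    prod_image hinj, powerset_univ, prod_mul_distrib]

theorem Fin.card_image_succ {m : ℕ} (T : Finset (Fin m)) : #(T.image Fin.succ) = #T :=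
  card_image_of_injective T (Fin.succ_injective m)

theorem Fin.card_insert_zero_image_succ {m : ℕ} (T : Finset (Fin m)) :
    #(insert 0 (T.image Fin.succ)) = #T + 1 := by
  rw [card_insert_of_notMem (by simp [Fin.succ_ne_zero]), Fin.card_image_succ]

theorem card_filter_even_card_fin_succ (m : ℕ) :
    #{S : Finset (Fin (m + 1)) | Even #S} = 2 ^ m := by
  rw [card_filter, Fin.sum_finset_succ]
  simp only [Fin.card_image_succ, Fin.card_insert_zero_image_succ, Nat.even_add_one]
  have hone (T : Finset (Fin m)) :
      ((if Even #T then 1 else 0) + if ¬Even #T then 1 else 0) = 1 := by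
    by_cases h : Even #T <;> simp [h]
  simp only [hone, sum_const, card_univ, Fintype.card_finset, Fintype.card_fin, smul_eq_mul,
    mul_one]

theorem Polynomial.eq_C_coeff_mul_prod_X_sub_C {R ι : Type*} [CommRing R] [IsDomain R]
    {p : Polynomial R} (s : Finset ι) {f : ι → R} (hf : Set.InjOn f s)
    (hdeg : p.natDegree ≤ #s) (hroot : ∀ i ∈ s, p.eval (f i) = 0) :
    p = C (p.coeff #s) * ∏ i ∈ s, (X - C (f i)) := by
  classical
  rcases eq_or_ne p 0 with rfl | hp
  · simp
  have hsub : (s.image f).val ≤ p.roots := (Multiset.le_iff_subset (s.image f).nodup).mpr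
    fun a ha => by
      obtain ⟨i, hi, rfl⟩ := mem_image.mp ha
      exact (mem_roots hp).mpr (hroot i hi)
  have hcard : #(s.image f) = #s := card_image_of_injOn hf
  have hroots : p.roots = (s.image f).val := (Multiset.eq_of_le_of_card_le hsub
    (by rw [card_val, hcard]; exact (card_roots' p).trans hdeg)).symm
  have hnat : p.natDegree = #s :=
    le_antisymm hdeg (by rw [← hcard, ← card_val, ← hroots]; exact card_roots' p)
  conv_lhs => rw [← C_leadingCoeff_mul_prod_multiset_X_sub_C (p := p)
    (by rw [hroots, hnat, card_val, hcard])]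
  rw [hroots, leadingCoeff, hnat, ← prod_eq_multiset_prod, prod_image hf]

def twoPowExps (σ : Type*) [Fintype σ] [DecidableEq σ] (N : ℕ) : Finset (σ → ℕ) :=
  {e ∈ Fintype.piFinset fun _ => range N | ∑ i, 2 ^ e i = N}

theorem mem_twoPowExps {σ : Type*} [Fintype σ] [DecidableEq σ] {N : ℕ} {e : σ → ℕ} :
    e ∈ twoPowExps σ N ↔ ∑ i, 2 ^ e i = N := by
  refine ⟨fun h => (mem_filter.mp h).2, fun h => mem_filter.mpr
    ⟨Fintype.mem_piFinset.mpr fun i => mem_range.mpr ?_, h⟩⟩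
  calc e i < 2 ^ e i := Nat.lt_two_pow_self
    _ ≤ ∑ k, 2 ^ e k :=
      single_le_sum (f := fun k => 2 ^ e k) (fun k _ => Nat.zero_le _) (mem_univ i)
    _ = N := h

noncomputable def twoPowPoly (R σ : Type*) [CommSemiring R] [Fintype σ] [DecidableEq σ]
    (N : ℕ) : MvPolynomial σ R :=
  ∑ e ∈ twoPowExps σ N, ∏ i, X i ^ 2 ^ e i

theorem P_eq_twoPowPoly (n : ℕ) : P n = twoPowPoly (ZMod 2) (Fin n) (2 ^ (n - 1)) := by
  rw [P, finsum_eq_sum_of_support_subset _ (s := twoPowExps (Fin n) (2 ^ (n - 1))) ?_]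
  · exact sum_congr rfl fun e he => if_pos (mem_twoPowExps.mp he)
  · intro e he
    rw [mem_coe, mem_twoPowExps]
    by_contra h
    exact he (if_neg h)

theorem sum_twoPowExps_eq_sum_filter_eq {S σ : Type*} [CommRing S] [CharP S 2] [Fintype σ]
    [DecidableEq σ] (v : σ → S) {a b : σ} (hv : v a = v b) (N : ℕ) :
    ∑ e ∈ twoPowExps σ N, ∏ k, v k ^ 2 ^ e k =
      ∑ e ∈ twoPowExps σ N with e a = e b, ∏ k, v k ^ 2 ^ e k := by
  rw [← sum_filter_add_sum_filter_not _ (fun e => e a = e b), add_eq_left]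
  set τ := Equiv.swap a b
  have hvτ (k : σ) : v (τ k) = v k := by
    rcases eq_or_ne k a with rfl | hka
    · rw [Equiv.swap_apply_left, hv]
    rcases eq_or_ne k b with rfl | hkb
    · rw [Equiv.swap_apply_right, hv]
    · rw [Equiv.swap_apply_of_ne_of_ne hka hkb]
  have hterm (e : σ → ℕ) : ∏ k, v k ^ 2 ^ (e ∘ τ) k = ∏ k, v k ^ 2 ^ e k :=
    calc ∏ k, v k ^ 2 ^ e (τ k) = ∏ k, v (τ k) ^ 2 ^ e (τ k) := by simp_rw [hvτ]
      _ = ∏ k, v k ^ 2 ^ e k := Equiv.prod_comp τ fun k => v k ^ 2 ^ e k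
  refine sum_involution (fun e _ => e ∘ τ) (fun e _ => by rw [hterm, CharTwo.add_self_eq_zero])
    (fun e he _ h => (mem_filter.mp he).2 ?_) (fun e he => ?_) (fun e _ => ?_)
  · have := congrFun h a
    simp only [Function.comp_apply, τ, Equiv.swap_apply_left] at this
    exact this.symm
  · rw [mem_filter, mem_twoPowExps] at he ⊢
    refine ⟨(Equiv.sum_comp τ fun k => 2 ^ e k).trans he.1, fun h => he.2 ?_⟩
    simp only [Function.comp_apply, τ, Equiv.swap_apply_left, Equiv.swap_apply_right] at h
    exact h.symm
  · funext k
    simp [τ]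

section CommSemiring

variable {R : Type*} [CommSemiring R] {m : ℕ}

theorem MvPolynomial.sum_X_injective [Nontrivial R] {σ : Type*} :
    Function.Injective fun T : Finset σ => ∑ i ∈ T, (X i : MvPolynomial σ R) := by
  classical
  intro T T' h
  ext j
  have hj := congrArg (coeff (Finsupp.single j 1)) h
  simp only [coeff_sum, coeff_X, Finsupp.single_left_inj one_ne_zero, sum_ite_eq'] at hj
  by_cases hT : j ∈ T <;> by_cases hT' : j ∈ T' <;> simp_all

theorem finSuccEquiv_sum_X_image_succ (T : Finset (Fin m)) :
    finSuccEquiv R m (∑ i ∈ T.image Fin.succ, X i) = Polynomial.C (∑ i ∈ T, X i) := by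
  simp [sum_image fun _ _ _ _ h => Fin.succ_injective m h, finSuccEquiv_X_succ]

theorem finSuccEquiv_sum_X_insert_zero (T : Finset (Fin m)) :
    finSuccEquiv R m (∑ i ∈ insert 0 (T.image Fin.succ), X i) =
      Polynomial.X + Polynomial.C (∑ i ∈ T, X i) := by
  rw [sum_insert (by simp [Fin.succ_ne_zero]), map_add, finSuccEquiv_X_zero,
    finSuccEquiv_sum_X_image_succ]

theorem finSuccEquiv_prod_odd_card (m : ℕ) :
    finSuccEquiv R m
        (∏ S ∈ Finset.univ.filter (fun S : Finset (Fin (m + 1)) => Odd S.card), ∑ i ∈ S, X i) =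
      Polynomial.C (∏ T ∈ Finset.univ.filter (fun T : Finset (Fin m) => Odd T.card),
          ∑ i ∈ T, X i) *
        ∏ T ∈ Finset.univ.filter (fun T : Finset (Fin m) => Even T.card),
          (Polynomial.X + Polynomial.C (∑ i ∈ T, X i)) := by
  rw [prod_filter, prod_filter, prod_filter, Fin.prod_finset_succ, map_prod, map_prod,
    ← prod_mul_distrib]
  refine prod_congr rfl fun T _ => ?_
  rw [Fin.card_image_succ, Fin.card_insert_zero_image_succ, map_mul]
  by_cases hT : Even #T
  · rw [if_neg (Nat.not_odd_iff_even.mpr hT), if_pos hT.add_one,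
      if_neg (Nat.not_odd_iff_even.mpr hT), if_pos hT, map_one, map_one, one_mul, one_mul,
      finSuccEquiv_sum_X_insert_zero]
  · have hT' : Odd #T := Nat.not_even_iff_odd.mp hT
    rw [if_pos hT', if_neg (Nat.not_odd_iff_even.mpr hT'.add_one), if_pos hT', if_neg hT,
      map_one, mul_one, mul_one, finSuccEquiv_sum_X_image_succ]

theorem twoPowPoly_fin_one : twoPowPoly R (Fin 1) 1 = X 0 := by
  rw [twoPowPoly, sum_eq_single_of_mem 0 (mem_twoPowExps.mpr (by simp)) fun e he hne => ?_]
  · simp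
  · rw [mem_twoPowExps, Fin.sum_univ_one] at he
    refine absurd (funext fun i => ?_) hne
    rw [Subsingleton.elim i 0]
    exact Nat.pow_right_injective le_rfl (he.trans (pow_zero 2).symm)

theorem finSuccEquiv_prod_X_pow (a : Fin (m + 1) → ℕ) :
    finSuccEquiv R m (∏ k, X k ^ a k) =
      Polynomial.C (∏ k, X k ^ a k.succ) * Polynomial.X ^ a 0 := by
  simp [Fin.prod_univ_succ, finSuccEquiv_X_zero, finSuccEquiv_X_succ, mul_comm]

theorem finSuccEquiv_twoPowPoly (N : ℕ) :
    finSuccEquiv R m (twoPowPoly R (Fin (m + 1)) N) =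
      ∑ e ∈ twoPowExps (Fin (m + 1)) N,
        Polynomial.C (∏ k, X k ^ 2 ^ e k.succ) * Polynomial.X ^ 2 ^ e 0 := by
  simp only [twoPowPoly, map_sum, finSuccEquiv_prod_X_pow]

theorem natDegree_finSuccEquiv_twoPowPoly_le :
    (finSuccEquiv R (m + 1) (twoPowPoly R (Fin (m + 2)) (2 ^ (m + 1)))).natDegree ≤ 2 ^ m := by
  rw [finSuccEquiv_twoPowPoly]
  refine Polynomial.natDegree_sum_le_of_forall_le _ _ fun e he => ?_
  refine (Polynomial.natDegree_C_mul_X_pow_le _ _).trans (Nat.pow_le_pow_right two_pos ?_)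
  rw [mem_twoPowExps, Fin.sum_univ_succ, Fin.sum_univ_succ] at he
  have : 2 ^ e 0 < 2 ^ (m + 1) := by
    have := Nat.one_le_two_pow (n := e (Fin.succ 0))
    omega
  exact Nat.lt_succ_iff.mp ((Nat.pow_lt_pow_iff_right (by norm_num)).mp this)

theorem coeff_finSuccEquiv_twoPowPoly {N j : ℕ} (hj : 2 ^ j ≤ N) :
    (finSuccEquiv R m (twoPowPoly R (Fin (m + 1)) N)).coeff (2 ^ j) =
      twoPowPoly R (Fin m) (N - 2 ^ j) := by
  rw [finSuccEquiv_twoPowPoly, Polynomial.finsetSum_coeff]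
  simp only [Polynomial.coeff_C_mul_X_pow, (Nat.pow_right_injective le_rfl).eq_iff]
  rw [← sum_filter, twoPowPoly]
  refine sum_nbij' Fin.tail (fun e => (Fin.cons j e : Fin (m + 1) → ℕ)) (fun e he => ?_)
    (fun e he => ?_) (fun e he => ?_) (fun e _ => Fin.tail_cons _ _) (fun _ _ => rfl)
  · rw [mem_filter, mem_twoPowExps, Fin.sum_univ_succ] at he
    obtain ⟨he, rfl⟩ := he
    rw [mem_twoPowExps]
    exact (by omega : ∑ k : Fin m, 2 ^ e k.succ = N - 2 ^ e 0)
  · rw [mem_twoPowExps] at he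
    rw [mem_filter, mem_twoPowExps, Fin.sum_univ_succ]
    simp only [Fin.cons_zero, Fin.cons_succ]
    exact ⟨by omega, trivial⟩
  · rw [(mem_filter.mp he).2]
    exact Fin.cons_self_tail e

theorem eval_finSuccEquiv (x : MvPolynomial (Fin m) R) (f : MvPolynomial (Fin (m + 1)) R) :
    (finSuccEquiv R m f).eval x = aeval (Fin.cons x X) f := by
  have : (Polynomial.evalRingHom x).comp
      (finSuccEquiv R m : MvPolynomial (Fin (m + 1)) R →+* _) =
      (aeval (Fin.cons x X : Fin (m + 1) → MvPolynomial (Fin m) R)).toRingHom := by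
    refine MvPolynomial.ringHom_ext (fun r => ?_) fun i => ?_
    · simp [finSuccEquiv_apply]
    · refine Fin.cases ?_ (fun k => ?_) i <;> simp [finSuccEquiv_X_zero, finSuccEquiv_X_succ]
  exact congrArg (· f) this

theorem aeval_cons_sum_twoPowPoly {S ι : Type*} [CommRing S] [Algebra R S] [CharP S 2]
    (T : Finset ι) (a : ι → S) (v : Fin m → S) (N : ℕ) :
    aeval (Fin.cons (∑ i ∈ T, a i) v) (twoPowPoly R (Fin (m + 1)) N) =
      ∑ i ∈ T, aeval (Fin.cons (a i) v) (twoPowPoly R (Fin (m + 1)) N) := by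
  simp only [twoPowPoly, map_sum, map_prod, map_pow, aeval_X]
  simp only [Fin.prod_univ_succ, Fin.cons_zero, Fin.cons_succ, sum_pow_char_pow, sum_mul]
  exact sum_comm

theorem prod_cons_X_pow (i : Fin m) (e : Fin (m + 1) → ℕ) :
    ∏ k, (Fin.cons (X i) X : Fin (m + 1) → MvPolynomial (Fin m) R) k ^ e k =
      X i ^ e 0 * ∏ k, X k ^ e k.succ := by
  simp [Fin.prod_univ_succ]

theorem sum_twoPowExps_filter_zero_eq_succ (i : Fin m) (N : ℕ) :
    ∑ e ∈ twoPowExps (Fin (m + 1)) N with e 0 = e i.succ,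
        ∏ k, (Fin.cons (X i) X : Fin (m + 1) → MvPolynomial (Fin m) R) k ^ 2 ^ e k =
      ∑ e ∈ twoPowExps (Fin m) N with e i ≠ 0, ∏ k, X k ^ 2 ^ e k := by
  refine sum_nbij' (fun e => Function.update (Fin.tail e) i (e 0 + 1))
    (fun e => Fin.cons (e i - 1) (Function.update e i (e i - 1))) (fun e he => ?_)
    (fun e he => ?_) (fun e he => ?_) (fun e he => ?_) (fun e he => ?_)
  · rw [mem_filter, mem_twoPowExps] at he ⊢
    obtain ⟨hsum, hfix⟩ := he
    rw [Fin.sum_univ_succ, ← add_sum_erase _ _ (mem_univ i)] at hsum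
    rw [Fintype.sum_apply_update, Function.update_self]
    refine ⟨?_, by omega⟩
    rw [pow_succ, mul_two]
    simp only [Fin.tail]
    rw [hfix] at hsum ⊢
    omega
  · rw [mem_filter, mem_twoPowExps] at he ⊢
    obtain ⟨hsum, hi⟩ := he
    rw [Fin.sum_univ_succ, Fin.cons_zero]
    simp only [Fin.cons_succ, Function.update_self, and_true]
    rw [Fintype.sum_apply_update, ← hsum, ← add_sum_erase _ _ (mem_univ i)]
    rw [← add_assoc, ← mul_two, ← pow_succ, Nat.sub_add_cancel (Nat.pos_of_ne_zero hi)]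
  · rw [mem_filter] at he
    simp only [Function.update_self, Nat.add_sub_cancel, Function.update_idem]
    have htail : Function.update (Fin.tail e) i (e 0) = Fin.tail e := by
      rw [he.2]; exact Function.update_eq_self i _
    rw [htail, Fin.cons_self_tail]
  · rw [mem_filter] at he
    simp only [Fin.tail_cons, Fin.cons_zero, Function.update_idem,
      Nat.sub_add_cancel (Nat.pos_of_ne_zero he.2), Function.update_eq_self]
  · rw [mem_filter] at he
    rw [prod_cons_X_pow, Fintype.prod_apply_update (fun k c => X k ^ 2 ^ c),
      ← mul_prod_erase _ _ (mem_univ i), ← mul_assoc, ← pow_add, he.2, pow_succ, mul_two]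
    rfl

end CommSemiring

section CharTwo

variable {R : Type*} [CommRing R] [CharP R 2] {m : ℕ}

theorem aeval_cons_X_twoPowPoly (i : Fin m) (N : ℕ) :
    aeval (Fin.cons (X i) X : Fin (m + 1) → MvPolynomial (Fin m) R)
        (twoPowPoly R (Fin (m + 1)) N) =
      ∑ e ∈ twoPowExps (Fin m) N with e i ≠ 0, ∏ k, X k ^ 2 ^ e k := by
  simp only [twoPowPoly, map_sum, map_prod, map_pow, aeval_X]
  rw [sum_twoPowExps_eq_sum_filter_eq _ (a := 0) (b := i.succ) rfl,
    sum_twoPowExps_filter_zero_eq_succ]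

theorem aeval_cons_X_twoPowPoly_two_pow (i : Fin m) :
    aeval (Fin.cons (X i) X : Fin (m + 1) → MvPolynomial (Fin m) R)
        (twoPowPoly R (Fin (m + 1)) (2 ^ m)) = twoPowPoly R (Fin m) (2 ^ m) := by
  rw [aeval_cons_X_twoPowPoly, filter_true_of_mem fun e he => ?_, twoPowPoly]
  exact ne_zero_of_sum_two_pow_eq_two_pow (by simp) (mem_twoPowExps.mp he) i

theorem eval_finSuccEquiv_twoPowPoly_of_even {T : Finset (Fin m)} (hT : Even #T) :
    (finSuccEquiv R m (twoPowPoly R (Fin (m + 1)) (2 ^ m))).eval (∑ i ∈ T, X i) = 0 := by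
  rw [eval_finSuccEquiv, aeval_cons_sum_twoPowPoly T X X]
  simp only [aeval_cons_X_twoPowPoly_two_pow, sum_const]
  obtain ⟨k, hk⟩ := hT
  rw [hk, add_nsmul, CharTwo.add_self_eq_zero]

theorem finSuccEquiv_twoPowPoly_two_pow [IsDomain R] (m : ℕ) :
    finSuccEquiv R (m + 1) (twoPowPoly R (Fin (m + 2)) (2 ^ (m + 1))) =
      Polynomial.C (twoPowPoly R (Fin (m + 1)) (2 ^ m)) *
        ∏ T ∈ Finset.univ.filter (fun T : Finset (Fin (m + 1)) => Even T.card),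
          (Polynomial.X + Polynomial.C (∑ i ∈ T, X i)) := by
  have hcard := card_filter_even_card_fin_succ m
  rw [Polynomial.eq_C_coeff_mul_prod_X_sub_C {T : Finset (Fin (m + 1)) | Even #T}
    sum_X_injective.injOn (hcard ▸ natDegree_finSuccEquiv_twoPowPoly_le)
    fun T hT => eval_finSuccEquiv_twoPowPoly_of_even (mem_filter.mp hT).2, hcard,
    coeff_finSuccEquiv_twoPowPoly (Nat.pow_le_pow_right two_pos m.le_succ)]
  simp only [sub_eq_add_neg, CharTwo.neg_eq, pow_succ, mul_two, Nat.add_sub_cancel]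

theorem prod_odd_card_sum_X_eq_twoPowPoly [IsDomain R] (m : ℕ) :
    ∏ S ∈ Finset.univ.filter (fun S : Finset (Fin (m + 1)) => Odd S.card),
      (∑ i ∈ S, (X i : MvPolynomial (Fin (m + 1)) R)) = twoPowPoly R (Fin (m + 1)) (2 ^ m) := by
  induction m with
  | zero =>
    rw [show Finset.univ.filter (fun S : Finset (Fin 1) => Odd S.card) = {univ} by decide,
      prod_singleton, Fin.sum_univ_one, pow_zero, twoPowPoly_fin_one]
  | succ m ih =>
    apply (finSuccEquiv R (m + 1)).injective
    rw [finSuccEquiv_prod_odd_card, ih, finSuccEquiv_twoPowPoly_two_pow]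

end CharTwo

/-- The product over all subsets `S ⊆ {1,…,n}` of odd cardinality of the linear forms
`∑_{i ∈ S} t i` equals `P n`. -/
theorem stmt_0 (n : ℕ) (hn : 1 ≤ n) :
    ∏ S ∈ Finset.univ.filter (fun S : Finset (Fin n) => Odd S.card),
      (∑ i ∈ S, (X i : MvPolynomial (Fin n) (ZMod 2))) = P n := by
  obtain ⟨m, rfl⟩ := Nat.exists_eq_add_of_le' hn
  rw [P_eq_twoPowPoly, Nat.add_sub_cancel]
  exact prod_odd_card_sum_X_eq_twoPowPoly m
end

section
/- For every integer n ≥ 1 and every subset S ⊆ {1,…,n} of odd cardinality, the linear form Σ_{i∈S} t_i divides the polynomial P_n in F_2[t_1,…,t_n]. -/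
/-! Put `N = n - 1` and `L(x) = frobSum N x = ∑_{e ≤ N} (x u)^(2^e) ∈ R[u]`. Then `P n` is the
coefficient of `u^(2^N)` in `∏ᵢ L(tᵢ)`. In characteristic two `L` is additive and
`L(x)^2 = L(x) + x u + (x u)^(2^(N+1))`.

Pick `j ∈ S` and let `S' = S \ {j}`, of even size. Divisibility by `t_j + ∑_{k ∈ S'} t_k` means
that `P n` vanishes under `t_j ↦ ∑_{k ∈ S'} t_k`, which turns `∏ᵢ L(tᵢ)` into
`∑_{k ∈ S'} L(t_k)^2 ∏_{i ≠ j, k} L(tᵢ)`. Expanding the square, the `|S'|` terms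
`L(t_k) ∏_{i ≠ j, k} L(tᵢ)` all equal `∏_{i ≠ j} L(tᵢ)` and cancel in pairs; the terms
`(t_k u)^(2^(N+1)) ⋯` start beyond degree `2^N`; and `t_k u ∏_{i ≠ j, k} L(tᵢ)` has no `u^(2^N)`
term, since every exponent in a product of `N - 1` factors `L` has at most `N - 1` binary digits,
while `2^N - 1` has `N`. -/

open MvPolynomial

namespace Nat

theorem length_bitIndices_succ_le (a : ℕ) :
    (a + 1).bitIndices.length ≤ a.bitIndices.length + 1 := by
  induction a using Nat.strong_induction_on with
  | _ a ih =>
    obtain ⟨m, rfl | rfl⟩ := a.even_or_odd'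
    · simp
    · rw [show 2 * m + 1 + 1 = 2 * (m + 1) by ring]
      simpa using (ih m (by omega)).trans (Nat.le_succ _)

theorem length_bitIndices_add_two_pow_le (a e : ℕ) :
    (a + 2 ^ e).bitIndices.length ≤ a.bitIndices.length + 1 := by
  induction e generalizing a with
  | zero => exact length_bitIndices_succ_le a
  | succ e ih =>
    obtain ⟨m, rfl | rfl⟩ := a.even_or_odd'
    · rw [show 2 * m + 2 ^ (e + 1) = 2 * (m + 2 ^ e) by ring]
      simpa using ih m
    · rw [show 2 * m + 1 + 2 ^ (e + 1) = 2 * (m + 2 ^ e) + 1 by ring]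
      simpa using ih m

theorem length_bitIndices_two_pow_sub_one (N : ℕ) : (2 ^ N - 1).bitIndices.length = N := by
  induction N with
  | zero => simp
  | succ N ih =>
    rw [show 2 ^ (N + 1) - 1 = 2 * (2 ^ N - 1) + 1 by have := N.one_le_two_pow; omega]
    simpa using ih

end Nat

namespace Polynomial

variable {R ι : Type*} [CommRing R]

noncomputable def frobSum (N : ℕ) (x : R) : R[X] :=
  ∑ e ∈ Finset.range (N + 1), C (x ^ 2 ^ e) * X ^ 2 ^ e

theorem map_frobSum {S : Type*} [CommRing S] (φ : R →+* S) (N : ℕ) (x : R) :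
    (frobSum N x).map φ = frobSum N (φ x) := by
  simp [frobSum, Polynomial.map_sum]

theorem coeff_prod_frobSum_two_pow [Fintype ι] (N : ℕ) (a : ι → R) :
    (∏ i, frobSum N (a i)).coeff (2 ^ N) =
      ∑ᶠ e : ι → ℕ, if ∑ i, 2 ^ e i = 2 ^ N then ∏ i, a i ^ 2 ^ e i else 0 := by
  classical
  have hsupp : (Function.support fun e : ι → ℕ =>
      if ∑ i, 2 ^ e i = 2 ^ N then ∏ i, a i ^ 2 ^ e i else 0) ⊆
        (Fintype.piFinset fun _ : ι => Finset.range (N + 1) : Set (ι → ℕ)) := by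
    intro e he
    have hsum : ∑ i, 2 ^ e i = 2 ^ N := by
      by_contra h
      simp [h] at he
    simp only [Fintype.coe_piFinset, Set.mem_pi, Set.mem_univ,
      Finset.coe_range, Set.mem_Iio, forall_const, Nat.lt_succ_iff]
    intro i
    refine (Nat.pow_le_pow_iff_right one_lt_two).mp ?_
    rw [← hsum]
    exact Finset.single_le_sum (f := fun i => 2 ^ e i) (fun _ _ => Nat.zero_le _)
      (Finset.mem_univ i)
  rw [finsum_eq_sum_of_support_subset _ hsupp]
  simp_rw [frobSum, Finset.prod_univ_sum, finsetSum_coeff]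
  refine Finset.sum_congr rfl fun e _ => ?_
  rw [Finset.prod_mul_distrib, ← map_prod, Finset.prod_pow_eq_pow_sum, coeff_C_mul_X_pow]
  exact if_congr eq_comm rfl rfl

theorem coeff_prod_frobSum_eq_zero (N : ℕ) (a : ι → R) {t : Finset ι} {m : ℕ}
    (h : t.card < m.bitIndices.length) : (∏ i ∈ t, frobSum N (a i)).coeff m = 0 := by
  classical
  induction t using Finset.induction_on generalizing m with
  | empty =>
    have hm : m ≠ 0 := by
      rintro rfl
      simp at h
    simp [Polynomial.coeff_one, hm]
  | insert k t hk ih =>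
    rw [Finset.prod_insert hk, frobSum, Finset.sum_mul, finsetSum_coeff]
    refine Finset.sum_eq_zero fun e _ => ?_
    rw [mul_assoc, coeff_C_mul, coeff_X_pow_mul']
    split_ifs with he
    · have := Nat.length_bitIndices_add_two_pow_le (m - 2 ^ e) e
      rw [Nat.sub_add_cancel he] at this
      rw [Finset.card_insert_of_notMem hk] at h
      rw [ih (by omega), mul_zero]
    · exact mul_zero _

variable [CharP R 2]

theorem frobSum_sum (N : ℕ) (s : Finset ι) (a : ι → R) :
    frobSum N (∑ k ∈ s, a k) = ∑ k ∈ s, frobSum N (a k) := by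
  simp only [frobSum, map_sum, sum_pow_char_pow, Finset.sum_mul]
  exact Finset.sum_comm

theorem frobSum_sq (N : ℕ) (x : R) :
    frobSum N x ^ 2 = frobSum N x + C x * X + C (x ^ 2 ^ (N + 1)) * X ^ 2 ^ (N + 1) := by
  have hsq : frobSum N x ^ 2 + C x * X =
      frobSum N x + C (x ^ 2 ^ (N + 1)) * X ^ 2 ^ (N + 1) := by
    rw [frobSum, sum_pow_char, ← Finset.sum_range_succ, Finset.sum_range_succ' _ (N + 1)]
    congr 1
    · refine Finset.sum_congr rfl fun e _ => ?_
      rw [mul_pow, ← C_pow, ← pow_mul, ← pow_mul, ← pow_succ]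
    · simp
  linear_combination hsq - C x * X * CharTwo.two_eq_zero (R := R[X])

theorem coeff_frobSum_sum_mul_prod_eq_zero (N : ℕ) (a : ι → R) {s t : Finset ι} (hst : s ⊆ t)
    (hs : Even s.card) (ht : t.card = N) :
    (frobSum N (∑ k ∈ s, a k) * ∏ i ∈ t, frobSum N (a i)).coeff (2 ^ N) = 0 := by
  classical
  have hterm : ∀ k ∈ s, (frobSum N (a k) * ∏ i ∈ t, frobSum N (a i)).coeff (2 ^ N) =
      (∏ i ∈ t, frobSum N (a i)).coeff (2 ^ N) := by
    intro k hk
    have hkt := hst hk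
    have hN : 2 ^ N = (2 ^ N - 1) + 1 := (Nat.succ_pred_eq_of_pos (by positivity)).symm
    have hlow : (∏ i ∈ t.erase k, frobSum N (a i)).coeff (2 ^ N - 1) = 0 := by
      refine coeff_prod_frobSum_eq_zero N a ?_
      rw [Finset.card_erase_of_mem hkt, ht, Nat.length_bitIndices_two_pow_sub_one]
      have := Finset.card_pos.mpr ⟨k, hkt⟩
      omega
    have hhigh : (C (a k ^ 2 ^ (N + 1)) * X ^ 2 ^ (N + 1) *
        ∏ i ∈ t.erase k, frobSum N (a i)).coeff (2 ^ N) = 0 := by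
      rw [mul_assoc, coeff_C_mul, coeff_X_pow_mul', if_neg, mul_zero]
      exact not_le.mpr (Nat.pow_lt_pow_right one_lt_two N.lt_succ_self)
    rw [← Finset.mul_prod_erase t _ hkt, ← mul_assoc, ← sq, frobSum_sq, add_mul, add_mul,
      coeff_add, coeff_add, hhigh, mul_assoc, coeff_C_mul, hN, coeff_X_mul, ← hN,
      hlow, mul_zero, add_zero, add_zero]
  obtain ⟨m, hm⟩ := hs
  rw [frobSum_sum, Finset.sum_mul, finsetSum_coeff, Finset.sum_congr rfl hterm,
    Finset.sum_const, hm, add_nsmul, CharTwo.add_self_eq_zero]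

end Polynomial

theorem MvPolynomial.sub_dvd_sub_aeval_update {σ R : Type*} [CommRing R] [DecidableEq σ]
    (j : σ) (g p : MvPolynomial σ R) : X j - g ∣ p - aeval (Function.update X j g) p := by
  rw [← Ideal.mem_span_singleton, ← Ideal.Quotient.eq]
  let π := Ideal.Quotient.mkₐ R (Ideal.span {X j - g})
  have h : π.comp (aeval (Function.update X j g)) = π := by
    refine MvPolynomial.algHom_ext fun i => ?_
    rcases eq_or_ne i j with rfl | hij
    · simp only [AlgHom.comp_apply, aeval_X, Function.update_self]
      exact (Ideal.Quotient.eq.mpr (Ideal.mem_span_singleton.mpr ⟨-1, by ring⟩))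
    · simp [hij]
  exact (congrArg (· p) h).symm

theorem P_eq_coeff (n : ℕ) :
    P n = (∏ i, Polynomial.frobSum (n - 1) (X i : MvPolynomial (Fin n) (ZMod 2))).coeff
      (2 ^ (n - 1)) :=
  (Polynomial.coeff_prod_frobSum_two_pow _ _).symm

theorem stmt_1_general (n : ℕ) (S : Finset (Fin n)) (hS : Odd S.card) :
    (∑ i ∈ S, (X i : MvPolynomial (Fin n) (ZMod 2))) ∣ P n := by
  obtain ⟨j, hj⟩ := Finset.card_pos.mp hS.pos
  set g := ∑ i ∈ S.erase j, (X i : MvPolynomial (Fin n) (ZMod 2))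
  have hform : ∑ i ∈ S, X i = X j - g := by
    rw [CharTwo.sub_eq_add, Finset.add_sum_erase _ _ hj]
  have hvanish : aeval (Function.update X j g) (P n) = 0 := by
    rw [P_eq_coeff, ← AlgHom.coe_toRingHom, ← Polynomial.coeff_map, Polynomial.map_prod]
    simp only [Polynomial.map_frobSum, AlgHom.coe_toRingHom, aeval_X]
    rw [Finset.prod_congr rfl fun i _ =>
        Function.apply_update (fun _ => Polynomial.frobSum (n - 1)) X j g i,
      Finset.prod_update_of_mem (Finset.mem_univ j)]
    refine Polynomial.coeff_frobSum_sum_mul_prod_eq_zero _ _ ?_ ?_ ?_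
    · exact fun i hi => by simpa using Finset.ne_of_mem_erase hi
    · rw [Finset.card_erase_of_mem hj]
      exact Nat.Odd.sub_odd hS odd_one
    · rw [Finset.card_univ_sdiff, Finset.card_singleton, Fintype.card_fin]
  have hdvd := sub_dvd_sub_aeval_update j g (P n)
  rwa [hvanish, sub_zero, ← hform] at hdvd

/-- For every subset `S ⊆ {1,…,n}` of odd cardinality, the linear form `∑_{i ∈ S} t i`
divides `P n` in `F₂[t 1, …, t n]`. -/
theorem stmt_1 (n : ℕ) (hn : 1 ≤ n) (S : Finset (Fin n)) (hS : Odd S.card) :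
    (∑ i ∈ S, (X i : MvPolynomial (Fin n) (ZMod 2))) ∣ P n :=
  stmt_1_general n S hS
end

section
/- Let n ≥ 2 and let i be any index with 2 ≤ i ≤ n. Substituting t_1 := t_i in the polynomial P_n ∈ F_2[t_1,…,t_n] yields the polynomial Σ_{(e_2,…,e_n)} t_2^{2^{e_2}} ⋯ t_n^{2^{e_n}}, where the sum is over all (n−1)-tuples (e_2,…,e_n) of nonnegative integers with 2^{e_2}+⋯+2^{e_n} = 2^{n−1}. In particular the result of this substitution is the same for every choice of i with 2 ≤ i ≤ n. -/
open MvPolynomial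

/-!
After the substitution `t 1 := t i`, the monomials of `P n` with `e 1 ≠ e i` cancel in pairs
(swap `e 1` and `e i`; we are in characteristic 2), while for `e 1 = e i` the factor
`t i ^ 2 ^ e i * t i ^ 2 ^ e i` merges into `t i ^ 2 ^ (e i + 1)`. Merging is a bijection onto the
`(n - 1)`-tuples of the target sum with positive `i`-th entry, and that is all of them:
otherwise `2 ^ (n - 1) - 1`, whose binary digit sum is `n - 1`, would be a sum of
`n - 2` powers of two. Binary digit sums are subadditive by Legendre's formula, since
`a! * b! ∣ (a + b)!`.
-/

open Function

namespace Nat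

theorem digit_sum_add_le (p : ℕ) [Fact p.Prime] (a b : ℕ) :
    (p.digits (a + b)).sum ≤ (p.digits a).sum + (p.digits b).sum := by
  have hval : padicValNat p a ! + padicValNat p b ! ≤ padicValNat p (a + b)! := by
    rw [← padicValNat.mul (factorial_ne_zero a) (factorial_ne_zero b)]
    exact (padicValNat_dvd_iff_le (factorial_ne_zero _)).mp
      (pow_padicValNat_dvd.trans (factorial_mul_factorial_dvd_factorial_add a b))
  have hmul := Nat.mul_le_mul_left (p - 1) hval
  rw [Nat.mul_add, sub_one_mul_padicValNat_factorial, sub_one_mul_padicValNat_factorial,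
    sub_one_mul_padicValNat_factorial] at hmul
  have := digit_sum_le p a
  have := digit_sum_le p b
  have := digit_sum_le p (a + b)
  omega

theorem digit_sum_base_pow {b : ℕ} (hb : 1 < b) (e : ℕ) : (b.digits (b ^ e)).sum = 1 := by
  simpa [digits_of_lt b 1 one_ne_zero hb] using
    congrArg List.sum (digits_base_pow_mul (k := e) hb one_pos)

theorem digit_sum_two_pow_sub_one (m : ℕ) : (Nat.digits 2 (2 ^ m - 1)).sum = m := by
  induction m with
  | zero => simp
  | succ m ih =>
    have h : 2 ^ (m + 1) - 1 = 1 + 2 * (2 ^ m - 1) := by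
      have := Nat.one_le_two_pow (n := m)
      rw [pow_succ]
      omega
    rw [h, digits_add 2 one_lt_two 1 _ one_lt_two (Or.inl one_ne_zero), List.sum_cons, ih]
    omega

theorem digit_sum_sum_two_pow_le {ι : Type*} (s : Finset ι) (g : ι → ℕ) :
    (Nat.digits 2 (∑ j ∈ s, 2 ^ g j)).sum ≤ s.card := by
  classical
  induction s using Finset.induction_on with
  | empty => simp
  | insert j s hj ih =>
    rw [Finset.sum_insert hj, Finset.card_insert_of_notMem hj]
    have := digit_sum_add_le 2 (2 ^ g j) (∑ k ∈ s, 2 ^ g k)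
    rw [digit_sum_base_pow one_lt_two] at this
    omega

end Nat

@[to_additive]
theorem Finset.prod_update_succ_of_apply_succ {κ M : Type*} [Fintype κ] [DecidableEq κ]
    [CommMonoid M] (F : κ → ℕ → M) (hF : ∀ j k, F j (k + 1) = F j k * F j k) (e : κ → ℕ)
    (b : κ) : ∏ j, F j (update e b (e b + 1) j) = F b (e b) * ∏ j, F j (e j) := by
  rw [Finset.prod_congr rfl fun j _ => apply_update F e b (e b + 1) j,
    Finset.prod_update_of_mem (Finset.mem_univ b), hF, mul_assoc,
    ← Finset.prod_eq_mul_prod_sdiff_singleton b (fun j => F j (e j)) (by simp)]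

section MergeExps

variable {ι : Type*} [DecidableEq ι] {a b : ι}

def mergeExps (a : ι) (hb : b ≠ a) (e : ι → ℕ) : {j // j ≠ a} → ℕ :=
  update (fun j => e j) ⟨b, hb⟩ (e b + 1)

def splitExps (a : ι) (hb : b ≠ a) (f : {j // j ≠ a} → ℕ) : ι → ℕ :=
  fun i => if h : i = a then f ⟨b, hb⟩ - 1 else update f ⟨b, hb⟩ (f ⟨b, hb⟩ - 1) ⟨i, h⟩

variable (hb : b ≠ a)
include hb

@[simp]
theorem mergeExps_apply_right (e : ι → ℕ) : mergeExps a hb e ⟨b, hb⟩ = e b + 1 := by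
  simp [mergeExps]

theorem splitExps_apply_left (f : {j // j ≠ a} → ℕ) :
    splitExps a hb f a = splitExps a hb f b := by
  simp [splitExps, hb]

theorem splitExps_mergeExps {e : ι → ℕ} (he : e a = e b) :
    splitExps a hb (mergeExps a hb e) = e := by
  funext i
  by_cases hi : i = a
  · simp [splitExps, hi, he]
  · simp [splitExps, mergeExps, hi]

theorem mergeExps_splitExps {f : {j // j ≠ a} → ℕ} (hf : f ⟨b, hb⟩ ≠ 0) :
    mergeExps a hb (splitExps a hb f) = f := by
  funext j
  by_cases hj : j = ⟨b, hb⟩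
  · subst hj
    simp only [mergeExps_apply_right, splitExps, dif_neg hb, update_self]
    omega
  · simp [splitExps, mergeExps, hj, j.2]

@[to_additive]
theorem prod_mergeExps [Fintype ι] {M : Type*} [CommMonoid M] (F : ι → ℕ → M)
    (hF : ∀ i k, F i (k + 1) = F i k * F i k) (hFab : F a = F b) {e : ι → ℕ}
    (he : e a = e b) : ∏ j, F j.1 (mergeExps a hb e j) = ∏ i, F i (e i) := by
  rw [mergeExps, Finset.prod_update_succ_of_apply_succ (fun j : {j // j ≠ a} => F j)
    (fun j => hF j), Fintype.prod_eq_mul_prod_subtype_ne _ a, hFab, he]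

end MergeExps

section DyadicSum

variable {ι : Type*} [Fintype ι]

def dyadicExps (ι : Type*) [Fintype ι] (N : ℕ) : Set (ι → ℕ) := {e | ∑ i, 2 ^ e i = N}

theorem dyadicExps_finite (N : ℕ) : (dyadicExps ι N).Finite := by
  classical
  refine (Set.finite_Iic fun _ => N).subset fun e (he : ∑ i, 2 ^ e i = N) i => ?_
  calc e i ≤ 2 ^ e i := Nat.lt_two_pow_self.le
    _ ≤ N := he ▸ Finset.single_le_sum (f := fun i => 2 ^ e i) (by simp) (Finset.mem_univ i)

theorem ne_zero_of_mem_dyadicExps_two_pow_card {f : ι → ℕ}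
    (hf : f ∈ dyadicExps ι (2 ^ Fintype.card ι)) (j : ι) : f j ≠ 0 := by
  classical
  intro hj
  have hrest : ∑ k ∈ Finset.univ.erase j, 2 ^ f k = 2 ^ Fintype.card ι - 1 := by
    have hsplit := Finset.add_sum_erase _ (fun k => 2 ^ f k) (Finset.mem_univ j)
    simp only [hj, pow_zero] at hsplit
    have hf' : ∑ i, 2 ^ f i = 2 ^ Fintype.card ι := hf
    omega
  have hle := Nat.digit_sum_sum_two_pow_le (Finset.univ.erase j) f
  rw [hrest, Nat.digit_sum_two_pow_sub_one, Finset.card_erase_of_mem (Finset.mem_univ j),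
    Finset.card_univ] at hle
  have := Fintype.card_pos_iff.mpr ⟨j⟩
  omega

variable {A : Type*} [CommSemiring A]

noncomputable def dyadicSum (N : ℕ) (x : ι → A) : A :=
  ∑ᶠ e ∈ dyadicExps ι N, ∏ i, x i ^ 2 ^ e i

theorem dyadicSum_eq_finsum_ite (N : ℕ) (x : ι → A) :
    dyadicSum N x = ∑ᶠ e : ι → ℕ, if ∑ i, 2 ^ e i = N then ∏ i, x i ^ 2 ^ e i else 0 := by
  simp only [dyadicSum, dyadicExps, Set.mem_ofPred_eq, finsum_eq_if]

theorem map_dyadicSum {B G : Type*} [CommSemiring B] [FunLike G A B] [RingHomClass G A B]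
    (g : G) (N : ℕ) (x : ι → A) : g (dyadicSum N x) = dyadicSum N (g ∘ x) := by
  have := (g : A →+ B).map_finsum_mem (fun e => ∏ i, x i ^ 2 ^ e i) (dyadicExps_finite N)
  simpa only [dyadicSum, AddMonoidHom.coe_coe, map_prod, map_pow, comp_apply] using this

variable [DecidableEq ι] {a b : ι}

theorem finsum_mem_dyadicExps_sdiff_eq_zero [CharP A 2] (N : ℕ) {x : ι → A} (hx : x a = x b) :
    ∑ᶠ e ∈ dyadicExps ι N \ {e | e a = e b}, ∏ i, x i ^ 2 ^ e i = 0 := by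
  set σ := Equiv.swap a b
  have hxσ (i : ι) : x (σ i) = x i := by
    rcases eq_or_ne i a with rfl | hia
    · simp [σ, hx]
    rcases eq_or_ne i b with rfl | hib
    · simp [σ, hx]
    · rw [Equiv.swap_apply_of_ne_of_ne hia hib]
  have hsum (e : ι → ℕ) : ∑ i, 2 ^ e (σ i) = ∑ i, 2 ^ e i :=
    Equiv.sum_comp σ (fun i => 2 ^ e i)
  have hprod (e : ι → ℕ) : ∏ i, x i ^ 2 ^ e (σ i) = ∏ i, x i ^ 2 ^ e i := by
    simpa only [hxσ] using Equiv.prod_comp σ (fun i => x i ^ 2 ^ e i)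
  rw [finsum_mem_eq_finite_toFinset_sum _ ((dyadicExps_finite N).subset Set.sdiff_subset)]
  refine Finset.sum_involution (fun e _ => e ∘ σ) (fun e _ => ?_) (fun e he _ => ?_)
    (fun e he => ?_) (fun e _ => ?_)
  · simp [hprod, CharTwo.add_self_eq_zero]
  · obtain ⟨-, hab⟩ := (Set.Finite.mem_toFinset _).mp he
    intro h
    exact hab (by simpa [σ] using (congrFun h a).symm)
  · obtain ⟨hN, hab⟩ := (Set.Finite.mem_toFinset _).mp he
    refine (Set.Finite.mem_toFinset _).mpr ⟨(hsum e).trans hN, fun h => hab ?_⟩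
    simpa [σ] using h.symm
  · funext i
    simp [σ]

theorem finsum_mem_dyadicExps_inter_eq (hb : b ≠ a) (N : ℕ) {x : ι → A} (hx : x a = x b) :
    ∑ᶠ e ∈ dyadicExps ι N ∩ {e | e a = e b}, ∏ i, x i ^ 2 ^ e i =
      ∑ᶠ f ∈ {f ∈ dyadicExps {j // j ≠ a} N | f ⟨b, hb⟩ ≠ 0},
        ∏ j : {j // j ≠ a}, x j ^ 2 ^ f j := by
  have hsum {e : ι → ℕ} (he : e a = e b) : ∑ j, 2 ^ mergeExps a hb e j = ∑ i, 2 ^ e i :=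
    sum_mergeExps hb (fun _ k => 2 ^ k) (fun _ k => by ring) rfl he
  have hprod {e : ι → ℕ} (he : e a = e b) :
      ∏ j : {j // j ≠ a}, x j ^ 2 ^ mergeExps a hb e j = ∏ i, x i ^ 2 ^ e i :=
    prod_mergeExps hb (fun i k => x i ^ 2 ^ k) (fun _ k => by ring) (by rw [hx]) he
  refine finsum_mem_eq_of_bijOn (mergeExps a hb)
    (Set.InvOn.bijOn (f' := splitExps a hb) ⟨?_, ?_⟩ ?_ ?_) fun e he => (hprod he.2).symm
  · exact fun e he => splitExps_mergeExps hb he.2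
  · exact fun f hf => mergeExps_splitExps hb hf.2
  · rintro e ⟨he, hab⟩
    exact ⟨(hsum hab).trans he, by simp⟩
  · rintro f ⟨hf, hf0⟩
    have hab := splitExps_apply_left hb f
    refine ⟨?_, hab⟩
    show _ = N
    rw [← hsum hab, mergeExps_splitExps hb hf0]
    exact hf

theorem dyadicSum_two_pow_card_sub_one_of_eq [CharP A 2] (hb : b ≠ a) {x : ι → A}
    (hx : x a = x b) :
    dyadicSum (2 ^ (Fintype.card ι - 1)) x =
      dyadicSum (2 ^ (Fintype.card ι - 1)) fun j : {j // j ≠ a} => x j := by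
  have hcard : Fintype.card {j // j ≠ a} = Fintype.card ι - 1 := by
    simp [Fintype.card_subtype_compl]
  have hpos : {f ∈ dyadicExps {j // j ≠ a} (2 ^ (Fintype.card ι - 1)) | f ⟨b, hb⟩ ≠ 0} =
      dyadicExps {j // j ≠ a} (2 ^ (Fintype.card ι - 1)) :=
    Set.sep_eq_self_iff_mem_true.mpr fun f hf =>
      ne_zero_of_mem_dyadicExps_two_pow_card (hcard ▸ hf) _
  rw [dyadicSum, ← finsum_mem_inter_add_sdiff {e | e a = e b} (dyadicExps_finite _),
    finsum_mem_dyadicExps_sdiff_eq_zero _ hx, add_zero, finsum_mem_dyadicExps_inter_eq hb _ hx,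
    hpos, dyadicSum]

end DyadicSum

/-- Substituting `t 1 := t i` (for any `i ≠ 1`) in `P n` yields
`∑_{(e 2,…,e n)} t 2^(2^(e 2)) ⋯ t n^(2^(e n))`, the sum being over all `(n-1)`-tuples of
nonnegative integers with `2^(e 2) + ⋯ + 2^(e n) = 2^(n-1)`.  In particular the result of the
substitution is independent of the choice of `i`. -/
theorem stmt_2 (n : ℕ) (hn : 2 ≤ n) (i : Fin n) (hi : i ≠ ⟨0, by omega⟩) :
    aeval
        (fun j : Fin n =>
          if j = ⟨0, by omega⟩ then (X i : MvPolynomial (Fin n) (ZMod 2)) else X j)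
        (P n) =
      ∑ᶠ e : {j : Fin n // j ≠ ⟨0, by omega⟩} → ℕ,
        if (∑ j, 2 ^ e j) = 2 ^ (n - 1) then
          ∏ j : {j : Fin n // j ≠ ⟨0, by omega⟩},
            (X (j : Fin n) : MvPolynomial (Fin n) (ZMod 2)) ^ 2 ^ e j
        else 0 := by
  set φ : Fin n → MvPolynomial (Fin n) (ZMod 2) :=
    fun j => if j = ⟨0, by omega⟩ then X i else X j
  have hφ : φ ⟨0, by omega⟩ = φ i := by simp [φ]
  have hcomp : aeval φ ∘ (X : Fin n → MvPolynomial (Fin n) (ZMod 2)) = φ := by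
    funext j
    exact aeval_X φ j
  have hrestrict : (fun j : {j : Fin n // j ≠ ⟨0, by omega⟩} => φ j) = fun j => X j.1 :=
    funext fun j => if_neg j.2
  have key := dyadicSum_two_pow_card_sub_one_of_eq hi hφ
  rw [Fintype.card_fin] at key
  rw [P, ← dyadicSum_eq_finsum_ite, map_dyadicSum, hcomp, key, hrestrict,
    dyadicSum_eq_finsum_ite]
end

section
/- For every integer n ≥ 1, the number of n-tuples (e_1,…,e_n) of nonnegative integers satisfying 2^{e_1} + 2^{e_2} + ⋯ + 2^{e_n} = 2^{n−1} is odd. -/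
/-!
The parity of a finite set is that of the fixed-point set of any involution of it. Swapping the
two halves of a tuple of length `2m` (or of the first `2m` entries of a tuple of length `2m + 1`)
is an involution of the decompositions of `2 ^ (k + 1)`, whose fixed points are the doubled
decompositions of `2 ^ k` of length `m` (or `m + 1`, the unpaired exponent dropping by one).
Hence the count for `(n, k + 1)` has the parity of the count for `(⌈n / 2⌉, k)`, and induction on
`k` reduces every `1 ≤ n ≤ 2 ^ k` to the single decomposition of length one.
-/
open Function Finset

theorem Function.Involutive.card_modEq_card_fixedPoints {α : Type*} [Finite α] {f : α → α}
    (hf : Involutive f) : Nat.card α ≡ Nat.card (fixedPoints f) [MOD 2] := by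
  classical
  have := Fintype.ofFinite α
  have hf2 : (show Function.End α from f) ^ 2 ^ 1 = 1 := funext hf
  simpa only [Nat.card_eq_fintype_card] using Equiv.Perm.card_fixedPoints_modEq (p := 2) hf2

theorem Nat.ModEq.odd_iff {a b : ℕ} (h : a ≡ b [MOD 2]) : Odd a ↔ Odd b := by
  rw [Nat.odd_iff, Nat.odd_iff, h]

def flipBool (α : Type*) : Equiv.Perm (Bool × α) := Equiv.prodCongr Equiv.boolNot (Equiv.refl α)

theorem flipBool_involutive (α : Type*) : Involutive (flipBool α) :=
  fun p => Prod.ext (Bool.not_not p.1) rfl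

theorem flipBool_optionCongr_involutive (α : Type*) : Involutive (flipBool α).optionCongr := by
  intro o
  simp [Option.map_map, (flipBool_involutive α).comp_self]

abbrev PowTwoDecomp (ι : Type*) [Fintype ι] (k : ℕ) := {e : ι → ℕ // ∑ i, 2 ^ e i = 2 ^ k}

namespace PowTwoDecomp

variable {ι κ α : Type*} [Fintype ι] [Fintype κ] [Fintype α] {k : ℕ}

lemma apply_le (e : PowTwoDecomp ι k) (i : ι) : e.1 i ≤ k :=
  (Nat.pow_le_pow_iff_right one_lt_two).1 <|
    (single_le_sum (f := fun j => 2 ^ e.1 j) (fun _ _ => Nat.zero_le _) (mem_univ i)).trans e.2.le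

instance : Finite (PowTwoDecomp ι k) :=
  Finite.of_injective (fun e i => (⟨e.1 i, Nat.lt_succ_of_le (e.apply_le i)⟩ : Fin (k + 1)))
    fun _ _ h => Subtype.ext <| funext fun i => congrArg Fin.val (congrFun h i)

lemma card_eq_one [Unique ι] : Nat.card (PowTwoDecomp ι k) = 1 := by
  refine Nat.card_eq_one_iff_exists.2 ⟨⟨fun _ => k, by simp⟩, fun e => Subtype.ext ?_⟩
  funext i
  simpa [Unique.uniq _ i] using e.2

def precomp (σ : ι ≃ κ) : PowTwoDecomp κ k ≃ PowTwoDecomp ι k where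
  toFun e := ⟨e.1 ∘ σ, (σ.sum_comp fun j => 2 ^ e.1 j).trans e.2⟩
  invFun e := ⟨e.1 ∘ σ.symm, (σ.symm.sum_comp fun j => 2 ^ e.1 j).trans e.2⟩
  left_inv e := by ext; simp
  right_inv e := by ext; simp

lemma card_eq_of_card_eq (h : Fintype.card ι = Fintype.card κ) :
    Nat.card (PowTwoDecomp ι k) = Nat.card (PowTwoDecomp κ k) :=
  (Nat.card_congr (precomp (Fintype.equivOfCardEq h))).symm

lemma precomp_involutive {σ : Equiv.Perm ι} (hσ : Involutive σ) :
    Involutive (precomp (k := k) σ) :=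
  fun e => Subtype.ext <| funext fun i => congrArg e.1 (hσ i)

lemma mem_fixedPoints_precomp {σ : Equiv.Perm ι} {e : PowTwoDecomp ι k} :
    e ∈ fixedPoints (precomp σ) ↔ ∀ i, e.1 (σ i) = e.1 i := by
  simp [IsFixedPt, precomp, Subtype.ext_iff, funext_iff]

lemma sum_two_pow_comp_snd (f : α → ℕ) : ∑ p : Bool × α, 2 ^ f p.2 = 2 * ∑ a, 2 ^ f a := by
  simp [Fintype.sum_prod_type, two_mul]

def double (f : PowTwoDecomp α k) : PowTwoDecomp (Bool × α) (k + 1) :=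
  ⟨fun p => f.1 p.2, by rw [sum_two_pow_comp_snd, f.2, pow_succ']⟩

lemma card_fixedPoints_flipBool :
    Nat.card (fixedPoints (precomp (k := k + 1) (flipBool α))) = Nat.card (PowTwoDecomp α k) := by
  refine (Nat.card_congr (Equiv.ofBijective
    (fun f => ⟨double f, mem_fixedPoints_precomp.2 fun _ => rfl⟩) ⟨?_, ?_⟩)).symm
  · intro f g h
    exact Subtype.ext <| funext fun a => congrArg (fun e => e.1.1 (false, a)) h
  · rintro ⟨⟨e, he⟩, hfix⟩
    have hsym : ∀ p : Bool × α, e p = e (false, p.2) := by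
      rintro ⟨_ | _, a⟩
      · rfl
      · exact (mem_fixedPoints_precomp.1 hfix (true, a)).symm
    have hsum : ∑ a, 2 ^ e (false, a) = 2 ^ k := by
      rw [Fintype.sum_congr _ _ fun p => congrArg (2 ^ ·) (hsym p),
        sum_two_pow_comp_snd fun a => e (false, a), pow_succ'] at he
      exact Nat.eq_of_mul_eq_mul_left two_pos he
    exact ⟨⟨_, hsum⟩, Subtype.ext <| Subtype.ext <| funext fun p => (hsym p).symm⟩

def doubleOption (f : PowTwoDecomp (Option α) k) : PowTwoDecomp (Option (Bool × α)) (k + 1) :=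
  ⟨fun o => o.elim (f.1 none + 1) fun p => f.1 (some p.2), by
    have hf := f.2
    rw [Fintype.sum_option] at hf ⊢
    simp only [Option.elim_none, Option.elim_some]
    rw [sum_two_pow_comp_snd fun a => f.1 (some a), pow_succ, pow_succ]
    omega⟩

lemma card_fixedPoints_flipBool_optionCongr :
    Nat.card (fixedPoints (precomp (k := k + 1) (flipBool α).optionCongr)) =
      Nat.card (PowTwoDecomp (Option α) k) := by
  refine (Nat.card_congr (Equiv.ofBijective
    (fun f => ⟨doubleOption f, mem_fixedPoints_precomp.2 fun o => by cases o <;> rfl⟩)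
      ⟨?_, ?_⟩)).symm
  · intro f g h
    refine Subtype.ext <| funext fun o => ?_
    cases o with
    | none => simpa [doubleOption] using congrArg (fun e => e.1.1 none) h
    | some a => exact congrArg (fun e => e.1.1 (some (false, a))) h
  · rintro ⟨⟨e, he⟩, hfix⟩
    have hsym : ∀ p : Bool × α, e (some p) = e (some (false, p.2)) := by
      rintro ⟨_ | _, a⟩
      · rfl
      · exact (mem_fixedPoints_precomp.1 hfix (some (true, a))).symm
    rw [Fintype.sum_option, Fintype.sum_congr _ _ fun p => congrArg (2 ^ ·) (hsym p),
      sum_two_pow_comp_snd fun a => e (some (false, a))] at he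
    -- `2 ^ e none` is even, so `e none` is a successor
    obtain ⟨c, hc⟩ : ∃ c, e none = c + 1 := by
      refine Nat.exists_eq_succ_of_ne_zero fun h0 => ?_
      rw [h0, pow_succ] at he
      omega
    have hsum : ∑ o : Option α, 2 ^ (o.elim c fun a => e (some (false, a))) = 2 ^ k := by
      rw [hc, pow_succ, pow_succ] at he
      rw [Fintype.sum_option]
      simp only [Option.elim_none, Option.elim_some]
      omega
    refine ⟨⟨_, hsum⟩, Subtype.ext <| Subtype.ext <| funext fun o => ?_⟩
    cases o with
    | none => exact hc.symm
    | some p => exact (hsym p).symm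

lemma card_prod_bool_modEq :
    Nat.card (PowTwoDecomp (Bool × α) (k + 1)) ≡ Nat.card (PowTwoDecomp α k) [MOD 2] :=
  card_fixedPoints_flipBool (α := α) ▸
    (precomp_involutive (flipBool_involutive α)).card_modEq_card_fixedPoints

lemma card_option_prod_bool_modEq :
    Nat.card (PowTwoDecomp (Option (Bool × α)) (k + 1)) ≡
      Nat.card (PowTwoDecomp (Option α) k) [MOD 2] :=
  card_fixedPoints_flipBool_optionCongr (α := α) ▸
    (precomp_involutive (flipBool_optionCongr_involutive α)).card_modEq_card_fixedPoints

theorem odd_card_fin {n k : ℕ} (h1 : 1 ≤ n) (h2 : n ≤ 2 ^ k) :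
    Odd (Nat.card (PowTwoDecomp (Fin n) k)) := by
  induction k generalizing n with
  | zero =>
    obtain rfl : n = 1 := by simp at h2; omega
    rw [card_eq_one]
    exact odd_one
  | succ k ih =>
    rw [pow_succ] at h2
    obtain ⟨m, rfl | rfl⟩ := Nat.even_or_odd' n
    · rw [card_eq_of_card_eq (κ := Bool × Fin m) (by simp), card_prod_bool_modEq.odd_iff]
      exact ih (by omega) (by omega)
    · rw [card_eq_of_card_eq (κ := Option (Bool × Fin m)) (by simp),
        card_option_prod_bool_modEq.odd_iff, card_eq_of_card_eq (κ := Fin (m + 1)) (by simp)]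
      exact ih (by omega) (by omega)

end PowTwoDecomp

/-- For every `n ≥ 1`, the number of `n`-tuples `(e 1, …, e n)` of nonnegative integers with
`2^(e 1) + ⋯ + 2^(e n) = 2^(n-1)` is odd. -/
theorem stmt_4 (n : ℕ) (hn : 1 ≤ n) :
    Odd (Nat.card {e : Fin n → ℕ // (∑ i, 2 ^ e i) = 2 ^ (n - 1)}) :=
  PowTwoDecomp.odd_card_fin hn (by have := Nat.lt_two_pow_self (n := n - 1); omega)
end

section
/- Let i, j, k be natural numbers, and let α_{i,j,k} denote the number of ordered pairs (I, J) of subsets of a fixed k-element set with |I| = i, |J| = j and I ∪ J equal to the whole set. Then α_{i,j,k} is odd if and only if k = i OR j, where i OR j denotes the bitwise or of i and j. In particular, for fixed i and j there is exactly one k for which α_{i,j,k} is odd. -/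
/-!
Choosing `I` first and then the complement of `J`, which must be a `(k - j)`-subset of `I`, gives
`α i j k = C(k, i) * C(i, k - j)` for `j ≤ k` (and `0` otherwise). By Lucas' theorem at `p = 2`,
`C(n, m)` is odd iff the binary digits of `m` are among those of `n`. So `α i j k` is odd iff
`i ⊆ k` and `k - j ⊆ i` bitwise; then `k - j ⊆ k`, so `j` is `k` with the bits of `k - j`
removed, and `i ||| j = k`. Conversely, if `k = i ||| j` then `k - j` is `i` with the bits of `j`
removed.
-/

namespace Nat

theorem lor_add_land (a b : ℕ) : (a ||| b) + (a &&& b) = a + b := by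
  induction a using Nat.binaryRec generalizing b with
  | zero => simp
  | bit x a ih =>
    rw [← bit_bodd_div2 b, lor_bit, land_bit, bit_val, bit_val, bit_val, bit_val]
    have := ih b.div2
    cases x <;> cases b.bodd <;> simp <;> omega

def BitSubset (m n : ℕ) : Prop := ∀ s, m.testBit s = true → n.testBit s = true

theorem bitSubset_iff_mod_two_and_div_two (m n : ℕ) :
    BitSubset m n ↔ (m % 2 = 1 → n % 2 = 1) ∧ BitSubset (m / 2) (n / 2) := by
  simp only [BitSubset, testBit_div_two]
  constructor
  · intro h
    exact ⟨by simpa [testBit_zero] using h 0, fun s => h (s + 1)⟩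
  · rintro ⟨h0, h⟩ (_ | s)
    · simpa [testBit_zero] using h0
    · exact h s

theorem odd_choose_iff_bitSubset (n m : ℕ) : Odd (n.choose m) ↔ BitSubset m n := by
  induction m using Nat.strong_induction_on generalizing n with
  | _ m ih =>
    rcases m.eq_zero_or_pos with rfl | hm
    · simp [BitSubset]
    have lucas : n.choose m ≡ (n % 2).choose (m % 2) * (n / 2).choose (m / 2) [MOD 2] :=
      Choose.choose_modEq_choose_mod_mul_choose_div_nat
    have lowDigit : Odd ((n % 2).choose (m % 2)) ↔ (m % 2 = 1 → n % 2 = 1) := by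
      rcases mod_two_eq_zero_or_one n with h | h <;>
        rcases mod_two_eq_zero_or_one m with h' | h' <;> simp [h, h']
    rw [bitSubset_iff_mod_two_and_div_two, ← ih (m / 2) (by omega), ← lowDigit, ← odd_mul,
      odd_iff, lucas, ← odd_iff]

theorem sub_eq_xor_of_bitSubset {m n : ℕ} (h : BitSubset m n) : n - m = n ^^^ m := by
  have hand : m &&& (n ^^^ m) = 0 := eq_of_testBit_eq fun s => by
    have := h s
    simp only [testBit_land, testBit_xor, zero_testBit]
    revert this; cases m.testBit s <;> cases n.testBit s <;> simp
  have hor : m ||| (n ^^^ m) = n := eq_of_testBit_eq fun s => by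
    have := h s
    simp only [testBit_lor, testBit_xor]
    revert this; cases m.testBit s <;> cases n.testBit s <;> simp
  have hadd := lor_add_land m (n ^^^ m)
  omega

theorem bitSubset_and_bitSubset_sub_iff {i j k : ℕ} (hj : j ≤ k) :
    BitSubset i k ∧ BitSubset (k - j) i ↔ k = i ||| j := by
  constructor
  · rintro ⟨hik, hdi⟩
    have hdk : BitSubset (k - j) k := fun s hs => hik s (hdi s hs)
    have hj_eq : j = k - (k - j) := by omega
    rw [hj_eq, sub_eq_xor_of_bitSubset hdk]
    refine eq_of_testBit_eq fun s => ?_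
    have hi := hik s
    have hd := hdi s
    simp only [testBit_lor, testBit_xor]
    revert hi hd; cases i.testBit s <;> cases k.testBit s <;> cases (k - j).testBit s <;> simp
  · rintro rfl
    have hjk : BitSubset j (i ||| j) := fun s hs => by simp [hs]
    refine ⟨fun s hs => by simp [hs], ?_⟩
    rw [sub_eq_xor_of_bitSubset hjk]
    intro s
    simp only [testBit_lor, testBit_xor]
    cases i.testBit s <;> cases j.testBit s <;> simp

end Nat

open Finset

section
variable {α : Type*} [Fintype α] [DecidableEq α]

theorem card_filter_union_eq_univ (s : Finset α) {j : ℕ} (hj : j ≤ Fintype.card α) :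
    #{t : Finset α | #t = j ∧ s ∪ t = univ} = (#s).choose (Fintype.card α - j) := by
  rw [← card_powersetCard]
  refine card_nbij' compl compl (fun t ht => ?_) (fun u hu => ?_) (fun t _ => compl_compl t)
    (fun u _ => compl_compl u)
  · simp only [mem_coe, mem_filter, mem_univ, true_and] at ht
    rw [mem_coe, mem_powersetCard, card_compl, ht.1]
    exact ⟨codisjoint_iff_compl_le_left.1 (codisjoint_iff.2 ht.2), rfl⟩
  · rw [mem_coe, mem_powersetCard] at hu
    simp only [mem_coe, mem_filter, mem_univ, true_and, card_compl, hu.2]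
    refine ⟨by omega, ?_⟩
    exact codisjoint_iff.1 (codisjoint_iff_compl_le_left.2 (by simpa using hu.1))

theorem card_filter_pairs_union_eq_univ {i j : ℕ} (hj : j ≤ Fintype.card α) :
    #{p : Finset α × Finset α | #p.1 = i ∧ #p.2 = j ∧ p.1 ∪ p.2 = univ} =
      (Fintype.card α).choose i * i.choose (Fintype.card α - j) := by
  calc #{p : Finset α × Finset α | #p.1 = i ∧ #p.2 = j ∧ p.1 ∪ p.2 = univ}
      = ∑ s : Finset α with #s = i, #{t : Finset α | #t = j ∧ s ∪ t = univ} := by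
        rw [card_filter, Fintype.sum_prod_type, sum_filter]
        refine sum_congr rfl fun s _ => ?_
        split_ifs with hs
        · simp only [hs, true_and, card_filter]
        · simp [hs]
    _ = #{s : Finset α | #s = i} * i.choose (Fintype.card α - j) := by
        rw [sum_const_nat fun s hs => ?_]
        rw [card_filter_union_eq_univ s hj, (mem_filter.1 hs).2]
    _ = (Fintype.card α).choose i * i.choose (Fintype.card α - j) := by
        rw [univ_filter_card_eq, card_powersetCard, card_univ]
end

/-- Let `α i j k` be the number of ordered pairs `(I, J)` of subsets of a `k`-element set with
`|I| = i`, `|J| = j` and `I ∪ J` the whole set.  Then `α i j k` is odd if and only if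
`k = i ||| j` (bitwise or).  In particular, for fixed `i` and `j` there is exactly one `k`
for which `α i j k` is odd. -/
theorem stmt_6 (i j k : ℕ) :
    Odd (Finset.univ.filter (fun p : Finset (Fin k) × Finset (Fin k) =>
        p.1.card = i ∧ p.2.card = j ∧ p.1 ∪ p.2 = Finset.univ)).card ↔
      k = i ||| j := by
  by_cases hj : j ≤ k
  · rw [card_filter_pairs_union_eq_univ (by simpa using hj), Fintype.card_fin, Nat.odd_mul,
      Nat.odd_choose_iff_bitSubset, Nat.odd_choose_iff_bitSubset]
    exact Nat.bitSubset_and_bitSubset_sub_iff hj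
  · have hk : k ≠ i ||| j := fun h => hj (h ▸ Nat.right_le_or)
    rw [iff_false_intro hk, iff_false, Nat.not_odd_iff_even, card_eq_zero.2]
    · exact Even.zero
    refine filter_eq_empty_iff.2 fun p _ hp => hj ?_
    simpa [hp.2.1] using card_le_univ p.2
end

section
/- Let N ≥ 1 and n ≥ 1 be integers and let d be an integer. If there exist polynomials P, Q ∈ ℤ[X] such that d·X^n = P(X)·X^{n+1} + Q(X)·((1+X)^N − 1) in ℤ[X], then N divides d. Equivalently: if d·X^n lies in the ideal of ℤ[X] generated by X^{n+1} and (1+X)^N − 1, then N divides d. -/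
/-!
Write `(1 + X)^N - 1 = X * u` with `u = ∑_{i<N} (1 + X)^i`, so that `u(0) = N`.
The hypothesis says `X * Q * u = Xⁿ * (d - X * P)`. Since `X` is prime and does not divide `u`,
`Xⁿ ∣ X * Q`, say `X * Q = Xⁿ * S`; cancelling `Xⁿ` gives `d - X * P = S * u`, and the constant
terms give `d = S(0) * N`.
-/

open Polynomial Finset

theorem one_add_X_pow_sub_one_eq {R : Type*} [CommRing R] (N : ℕ) :
    ((1 + X) ^ N - 1 : R[X]) = X * ∑ i ∈ range N, (1 + X) ^ i := by
  rw [mul_comm, ← geom_sum_mul, add_sub_cancel_left]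

theorem coeff_zero_geom_sum_one_add_X {R : Type*} [CommRing R] (N : ℕ) :
    (∑ i ∈ range N, (1 + X) ^ i : R[X]).coeff 0 = N := by
  simp [coeff_zero_eq_eval_zero, eval_finsetSum]

theorem coeff_zero_dvd_of_C_mul_X_pow_eq {R : Type*} [CommRing R] [IsDomain R] {d : R} {n : ℕ}
    {P Q u : R[X]} (hu : u.coeff 0 ≠ 0)
    (h : C d * X ^ n = P * X ^ (n + 1) + Q * (X * u)) : u.coeff 0 ∣ d := by
  have hdvd : X ^ n ∣ X * Q * u := ⟨C d - P * X, by linear_combination -h⟩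
  obtain ⟨S, hS⟩ := prime_X.pow_dvd_of_dvd_mul_right n (by rwa [X_dvd_iff]) hdvd
  have hcancel : C d - P * X = S * u :=
    mul_left_cancel₀ (pow_ne_zero n X_ne_zero) (by linear_combination h + u * hS)
  have hconst := congrArg (coeff · 0) hcancel
  simp only [coeff_sub, coeff_C_zero, mul_coeff_zero, coeff_X_zero, mul_zero, sub_zero] at hconst
  exact Dvd.intro_left _ hconst.symm

theorem stmt_7_general (N n : ℕ) (hN : 1 ≤ N) (d : ℤ)
    (h : ∃ P Q : Polynomial ℤ,
      C d * X ^ n = P * X ^ (n + 1) + Q * ((1 + X) ^ N - 1)) :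
    (N : ℤ) ∣ d := by
  obtain ⟨P, Q, h⟩ := h
  rw [one_add_X_pow_sub_one_eq] at h
  have hu := coeff_zero_geom_sum_one_add_X (R := ℤ) N
  rw [← hu]
  exact coeff_zero_dvd_of_C_mul_X_pow_eq (by rw [hu]; omega) h

/-- If `d·Xⁿ` lies in the ideal of `ℤ[X]` generated by `X^(n+1)` and `(1+X)^N - 1`
(with `N, n ≥ 1`), then `N` divides `d`. -/
theorem stmt_7 (N n : ℕ) (hN : 1 ≤ N) (hn : 1 ≤ n) (d : ℤ)
    (h : ∃ P Q : Polynomial ℤ,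
      C d * X ^ n = P * X ^ (n + 1) + Q * ((1 + X) ^ N - 1)) :
    (N : ℤ) ∣ d :=
  stmt_7_general N n hN d h
end

section
/- Let N ≥ 1 be an integer, let A = ℤ[X]/(X^N − 1), and let I be the ideal of A generated by the image of X − 1. Then for every integer n ≥ 1, the quotient abelian group I^n / I^{n+1} is isomorphic to ℤ/Nℤ. (This computes the graded ring associated to the augmentation filtration on the representation ring of a cyclic group of order N over an algebraically closed field of characteristic prime to N.) -/
/-!
Write `t` for the image of `X - 1`. Since every element of `A` is an integer modulo `t`,
the quotient `Iⁿ / Iⁿ⁺¹` is cyclic, generated by the class of `tⁿ`, and `m ↦ m tⁿ` identifies it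
with `ℤ` modulo `{m | tⁿ⁺¹ ∣ m tⁿ}`. This subgroup is `Nℤ`: on one hand
`X^N - 1 ≡ N (X - 1) mod (X - 1)²`, so `N t ∈ I²`; on the other hand, writing
`X^N - 1 = (X - 1) Φ` with `Φ(1) = N`, a relation `m (X - 1)ⁿ ≡ 0 mod ((X - 1)ⁿ⁺¹, X^N - 1)`
can be divided by `(X - 1)ⁿ` because the prime `X - 1` does not divide `Φ`, and evaluating the
result at `1` gives `N ∣ m`.
-/

open Polynomial

/-- `A N = ℤ[X]/(X^N - 1)`, the representation ring of a cyclic group of order `N` over an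
algebraically closed field of characteristic prime to `N`. -/
abbrev A (N : ℕ) : Type :=
  Polynomial ℤ ⧸ Ideal.span ({X ^ N - 1} : Set (Polynomial ℤ))

/-- `Iaug N` is the augmentation ideal of `A N`, generated by the image of `X - 1`. -/
noncomputable def Iaug (N : ℕ) : Ideal (A N) :=
  Ideal.span {Ideal.Quotient.mk (Ideal.span ({X ^ N - 1} : Set (Polynomial ℤ))) (X - 1)}

theorem Ideal.mem_span_singleton_pow_iff {R : Type*} [CommRing R] {t x : R} {n : ℕ} :
    x ∈ Ideal.span {t} ^ n ↔ t ^ n ∣ x := by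
  rw [Ideal.span_singleton_pow, Ideal.mem_span_singleton]

theorem nonempty_span_singleton_pow_quotient_addEquiv_zmod {R : Type*} [CommRing R] (t : R)
    (n k : ℕ) (hcast : ∀ a : R, ∃ m : ℤ, t ∣ a - m)
    (hker : ∀ m : ℤ, t ^ (n + 1) ∣ (m : R) * t ^ n ↔ (k : ℤ) ∣ m) :
    Nonempty ((↥(Ideal.span {t} ^ n) ⧸
      Submodule.comap (Ideal.span {t} ^ n).subtype (Ideal.span {t} ^ (n + 1))) ≃+ ZMod k) := by
  set I := Ideal.span {t}
  set P := Submodule.comap (I ^ n).subtype (I ^ (n + 1))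
  let x : ↥(I ^ n) := ⟨t ^ n, Ideal.mem_span_singleton_pow_iff.mpr dvd_rfl⟩
  let f : ℤ →+ ↥(I ^ n) ⧸ P := zmultiplesHom _ (Submodule.Quotient.mk x)
  have hf (m : ℤ) : f m = Submodule.Quotient.mk (m • x) := (Submodule.Quotient.mk_smul P m x).symm
  have hsurj : Function.Surjective f := by
    intro q
    obtain ⟨⟨y, hy⟩, rfl⟩ := Submodule.Quotient.mk_surjective P q
    obtain ⟨a, rfl⟩ := Ideal.mem_span_singleton_pow_iff.mp hy
    obtain ⟨m, b, hb⟩ := hcast a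
    refine ⟨m, ?_⟩
    rw [hf, Submodule.Quotient.eq, Submodule.mem_comap, Submodule.subtype_apply,
      AddSubgroupClass.coe_sub, Submodule.coe_smul_of_tower, zsmul_eq_mul,
      Ideal.mem_span_singleton_pow_iff]
    exact ⟨-b, by linear_combination (-t ^ n) * hb⟩
  have hf_ker : f.ker = AddSubgroup.zmultiples (k : ℤ) := by
    ext m
    rw [AddMonoidHom.mem_ker, hf, Submodule.Quotient.mk_eq_zero, Int.mem_zmultiples_iff, ← hker,
      Submodule.mem_comap, Submodule.subtype_apply, Submodule.coe_smul_of_tower, zsmul_eq_mul,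
      Ideal.mem_span_singleton_pow_iff]
  exact ⟨((QuotientAddGroup.quotientKerEquivOfSurjective f hsurj).symm.trans
    (QuotientAddGroup.quotientAddEquivOfEq hf_ker)).trans (Int.quotientZMultiplesNatEquivZMod k)⟩

namespace Polynomial

theorem X_sub_one_dvd_geom_sum_sub {R : Type*} [CommRing R] (N : ℕ) :
    X - 1 ∣ ∑ i ∈ Finset.range N, (X : R[X]) ^ i - N := by
  simpa using X_sub_C_dvd_sub_C_eval (a := (1 : R)) (p := ∑ i ∈ Finset.range N, (X : R[X]) ^ i)

theorem X_sub_one_sq_dvd_X_pow_sub_one_sub {R : Type*} [CommRing R] (N : ℕ) :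
    (X - 1 : R[X]) ^ 2 ∣ X ^ N - 1 - (N : R[X]) * (X - 1) := by
  obtain ⟨d, hd⟩ := X_sub_one_dvd_geom_sum_sub (R := R) N
  exact ⟨d, by linear_combination (X - 1) * hd - geom_sum_mul (X : R[X]) N⟩

theorem natCast_dvd_of_X_pow_sub_one_dvd {N n : ℕ} (hN : N ≠ 0) (hn : n ≠ 0) {m : ℤ}
    {v : ℤ[X]} (h : X ^ N - 1 ∣ (m : ℤ[X]) * (X - 1) ^ n - (X - 1) ^ (n + 1) * v) : (N : ℤ) ∣ m := by
  obtain ⟨k, rfl⟩ : ∃ k, n = k + 1 := ⟨n - 1, by omega⟩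
  obtain ⟨w, hw⟩ := h
  set Φ := ∑ i ∈ Finset.range N, (X : ℤ[X]) ^ i
  have hp : Prime (X - 1 : ℤ[X]) := by simpa using prime_X_sub_C (1 : ℤ)
  have hΦ : ¬ X - 1 ∣ Φ := by
    rw [← C_1, dvd_iff_isRoot, IsRoot, eval_finsetSum]
    simp [hN]
  have h1 : (X - 1) ^ k * ((m : ℤ[X]) - (X - 1) * v) = Φ * w :=
    mul_left_cancel₀ hp.ne_zero (by linear_combination hw - w * geom_sum_mul (X : ℤ[X]) N)
  obtain ⟨w', rfl⟩ := hp.pow_dvd_of_dvd_mul_left k hΦ ⟨_, h1.symm⟩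
  have h2 : (m : ℤ[X]) - (X - 1) * v = Φ * w' :=
    mul_left_cancel₀ (pow_ne_zero k hp.ne_zero) (by linear_combination h1)
  have heval := congrArg (eval 1) h2
  simp only [eval_sub, eval_intCast, eval_mul, eval_X, eval_one, sub_self, zero_mul, sub_zero, Φ,
    eval_finsetSum, eval_pow, one_pow, Finset.sum_const, Finset.card_range, nsmul_eq_mul,
    mul_one] at heval
  exact ⟨_, heval⟩

end Polynomial

noncomputable abbrev mkA (N : ℕ) : ℤ[X] →+* A N :=
  Ideal.Quotient.mk _

theorem mkA_X_pow_sub_one (N : ℕ) : mkA N (X ^ N - 1) = 0 :=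
  Ideal.Quotient.eq_zero_iff_mem.mpr (Ideal.mem_span_singleton_self _)

noncomputable def augGen (N : ℕ) : A N :=
  mkA N (X - 1)

theorem augGen_dvd_sub_intCast (N : ℕ) (a : A N) : ∃ m : ℤ, augGen N ∣ a - m := by
  obtain ⟨p, rfl⟩ := Ideal.Quotient.mk_surjective a
  obtain ⟨d, hd⟩ := X_sub_C_dvd_sub_C_eval (a := (1 : ℤ)) (p := p)
  refine ⟨p.eval 1, mkA N d, ?_⟩
  rw [augGen, ← map_intCast (mkA N), ← map_sub, ← map_mul, ← C_eq_intCast, Int.cast_id, hd, C_1]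

theorem augGen_sq_dvd_natCast_mul (N : ℕ) : augGen N ^ 2 ∣ (N : A N) * augGen N := by
  obtain ⟨d, hd⟩ := X_sub_one_sq_dvd_X_pow_sub_one_sub (R := ℤ) N
  have h := congrArg (mkA N) hd
  rw [map_sub, mkA_X_pow_sub_one, map_mul, map_natCast, map_mul, map_pow] at h
  exact ⟨-mkA N d, by rw [augGen]; linear_combination -h⟩

theorem augGen_pow_succ_dvd_intCast_mul_pow_iff {N n : ℕ} (hN : N ≠ 0) (hn : n ≠ 0) (m : ℤ) :
    augGen N ^ (n + 1) ∣ (m : A N) * augGen N ^ n ↔ (N : ℤ) ∣ m := by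
  constructor
  · rintro ⟨a, ha⟩
    obtain ⟨v, rfl⟩ := Ideal.Quotient.mk_surjective a
    refine natCast_dvd_of_X_pow_sub_one_dvd hN hn (v := v) (Ideal.mem_span_singleton.mp ?_)
    rw [← Ideal.Quotient.mk_eq_mk_iff_sub_mem]
    simpa [augGen] using ha
  · rintro ⟨j, rfl⟩
    obtain ⟨k, rfl⟩ : ∃ k, n = k + 1 := ⟨n - 1, by omega⟩
    have := (mul_dvd_mul_right (augGen_sq_dvd_natCast_mul N) (augGen N ^ k)).mul_left (j : A N)
    convert this using 1 <;> push_cast <;> ring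

/-- For every `n ≥ 1`, the quotient abelian group `Iⁿ / Iⁿ⁺¹` is isomorphic to `ℤ/Nℤ`,
where `I` is the ideal of `ℤ[X]/(X^N - 1)` generated by the image of `X - 1`. -/
theorem stmt_8 (N : ℕ) (hN : 1 ≤ N) (n : ℕ) (hn : 1 ≤ n) :
    Nonempty
      ((↥(Iaug N ^ n) ⧸ (Submodule.comap (Iaug N ^ n).subtype (Iaug N ^ (n + 1))))
        ≃+ ZMod N) :=
  nonempty_span_singleton_pow_quotient_addEquiv_zmod (augGen N) n N (augGen_dvd_sub_intCast N)
    (augGen_pow_succ_dvd_intCast_mul_pow_iff (by omega) (by omega))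
end

section
/- Let r ≥ 1, n ≥ 1. For every nonempty subset S = {i_1 < i_2 < ⋯ < i_s} of {1,…,r} with s ≤ n, let x_S = t_{i_1}^{n−s+1} t_{i_2} ⋯ t_{i_s} ∈ F_2[t_1,…,t_r]. Then every homogeneous polynomial f ∈ F_2[t_1,…,t_r] of degree n is congruent modulo the ideal J_r to an F_2-linear combination of the monomials x_S, S ranging over the nonempty subsets of {1,…,r} of cardinality at most n. -/
/-!
In characteristic 2, `t i * t j * t i ≡ t i * t j * t j` modulo `J r`. So once a monomial is
divisible by `∏_{a ∈ S} t a`, where `S` is its support, any further factor `t a` with `a ∈ S`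
may be traded for `t i₀`. Writing `t^d = (∏_{a ∈ S} t a) * ∏_{a ∈ S} t a ^ (d a - 1)` and moving
all the surplus exponents onto `i₀ = min S` turns `t^d` into `x_S`.
-/

open MvPolynomial

/-- `J r` is the ideal of `F₂[t 1, …, t r]` generated by the elements
`t i ^ 2 * t j + t i * t j ^ 2` for `1 ≤ i, j ≤ r`. -/
noncomputable def J (r : ℕ) : Ideal (MvPolynomial (Fin r) (ZMod 2)) :=
  Ideal.span {p | ∃ i j : Fin r, p = X i ^ 2 * X j + X i * X j ^ 2}

/-- For a nonempty subset `S = {i₁ < i₂ < ⋯ < i_s}` of `{1,…,r}`, `xS r n S` is the degree-`n`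
monomial `t i₁ ^ (n - s + 1) * t i₂ * ⋯ * t i_s` (and `0` if `S` is empty). -/
noncomputable def xS (r n : ℕ) (S : Finset (Fin r)) : MvPolynomial (Fin r) (ZMod 2) :=
  if h : S.Nonempty then (∏ i ∈ S, X i) * X (S.min' h) ^ (n - S.card) else 0

theorem mul_prod_eq_mul_prod_of_forall_mul_eq {ι M : Type*} [CommMonoid M] {m : M}
    {s : Finset ι} {f g : ι → M} (h : ∀ a ∈ s, m * f a = m * g a) :
    m * ∏ a ∈ s, f a = m * ∏ a ∈ s, g a := by
  classical
  induction s using Finset.induction_on with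
  | empty => rfl
  | insert a s ha ih =>
    rw [Finset.forall_mem_insert] at h
    rw [Finset.prod_insert ha, Finset.prod_insert ha, mul_left_comm, ih h.2, mul_left_comm,
      ← mul_assoc, h.1, mul_assoc]

theorem mul_pow_eq_mul_pow_of_mul_eq {M : Type*} [CommMonoid M] {m x y : M}
    (h : m * x = m * y) (k : ℕ) : m * x ^ k = m * y ^ k := by
  simpa only [Finset.prod_const, Finset.card_range] using
    mul_prod_eq_mul_prod_of_forall_mul_eq (s := Finset.range k) (f := fun _ ↦ x)
      (g := fun _ ↦ y) fun _ _ ↦ h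

theorem Finsupp.card_support_le_degree {σ : Type*} (d : σ →₀ ℕ) :
    d.support.card ≤ d.degree := by
  rw [Finsupp.degree_apply, Finset.card_eq_sum_ones]
  exact Finset.sum_le_sum fun a ha ↦ Nat.one_le_iff_ne_zero.2 (Finsupp.mem_support_iff.1 ha)

section

variable {r : ℕ}

theorem X_mul_X_mul_X_sub_mem_J (i j : Fin r) : X i * X j * X i - X i * X j * X j ∈ J r := by
  have hgen : X i ^ 2 * X j + X i * X j ^ 2 ∈ J r := Ideal.subset_span ⟨i, j, rfl⟩
  rw [CharTwo.sub_eq_add]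
  convert hgen using 1
  ring

theorem mk_prod_X_mul_X_eq {S : Finset (Fin r)} {a b : Fin r} (ha : a ∈ S) (hb : b ∈ S) :
    Ideal.Quotient.mk (J r) ((∏ c ∈ S, X c) * X a) =
      Ideal.Quotient.mk (J r) ((∏ c ∈ S, X c) * X b) := by
  obtain rfl | hab := eq_or_ne a b
  · rfl
  rw [Ideal.Quotient.eq, ← Finset.mul_prod_erase S X ha,
    ← Finset.mul_prod_erase _ X (Finset.mem_erase.2 ⟨hab.symm, hb⟩)]
  convert Ideal.mul_mem_right (∏ c ∈ (S.erase a).erase b, X c) _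
    (X_mul_X_mul_X_sub_mem_J a b) using 1
  ring

theorem mk_monomial_eq (d : Fin r →₀ ℕ) {i₀ : Fin r} (hi₀ : i₀ ∈ d.support) :
    Ideal.Quotient.mk (J r) (monomial d 1) =
      Ideal.Quotient.mk (J r) ((∏ a ∈ d.support, X a) * X i₀ ^ (d.degree - d.support.card)) := by
  have hpos : ∀ a ∈ d.support, 1 ≤ d a := fun a ha ↦
    Nat.one_le_iff_ne_zero.2 (Finsupp.mem_support_iff.1 ha)
  have hsplit : monomial d (1 : ZMod 2) =
      (∏ a ∈ d.support, X a) * ∏ a ∈ d.support, X a ^ (d a - 1) := by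
    rw [← prod_X_pow_eq_monomial, ← Finset.prod_mul_distrib]
    exact Finset.prod_congr rfl fun a ha ↦ by rw [← pow_succ', Nat.sub_add_cancel (hpos a ha)]
  have hexp : ∑ a ∈ d.support, (d a - 1) = d.degree - d.support.card := by
    rw [Finset.sum_tsub_distrib _ hpos, Finsupp.degree_apply, Finset.card_eq_sum_ones]
  rw [hsplit, ← hexp, ← Finset.prod_pow_eq_pow_sum]
  simp only [map_mul, map_prod, map_pow]
  refine mul_prod_eq_mul_prod_of_forall_mul_eq fun a ha ↦ mul_pow_eq_mul_pow_of_mul_eq ?_ _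
  simpa only [map_mul, map_prod] using mk_prod_X_mul_X_eq ha hi₀

theorem monomial_sub_xS_mem_J (d : Fin r →₀ ℕ) (hd : d.support.Nonempty) :
    monomial d 1 - xS r d.degree d.support ∈ J r := by
  rw [← Ideal.Quotient.eq, xS, dif_pos hd]
  exact mk_monomial_eq d (d.support.min'_mem hd)

end

theorem stmt_10_general (r n : ℕ) (hn : 1 ≤ n)
    (f : MvPolynomial (Fin r) (ZMod 2)) (hf : f.IsHomogeneous n) :
    ∃ lam : Finset (Fin r) → ZMod 2,
      f - ∑ S ∈ Finset.univ.filter (fun S : Finset (Fin r) => S.Nonempty ∧ S.card ≤ n),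
        lam S • xS r n S ∈ J r := by
  classical
  have hdeg : ∀ d ∈ f.support, d.degree = n := fun d hd ↦
    by_contra fun h ↦ mem_support_iff.1 hd (hf.coeff_eq_zero h)
  have hnonempty : ∀ d ∈ f.support, d.support.Nonempty := fun d hd ↦
    Finsupp.support_nonempty_iff.2 fun h ↦ by simp [h, ← hdeg d hd] at hn
  have hmaps : ∀ d ∈ f.support, d.support ∈
      Finset.univ.filter (fun S : Finset (Fin r) => S.Nonempty ∧ S.card ≤ n) := fun d hd ↦
    Finset.mem_filter.2
      ⟨Finset.mem_univ _, hnonempty d hd, hdeg d hd ▸ d.card_support_le_degree⟩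
  refine ⟨fun S ↦ ∑ d ∈ f.support with d.support = S, coeff d f, ?_⟩
  have hregroup : ∑ S ∈ Finset.univ.filter (fun S : Finset (Fin r) => S.Nonempty ∧ S.card ≤ n),
      (∑ d ∈ f.support with d.support = S, coeff d f) • xS r n S =
      ∑ d ∈ f.support, coeff d f • xS r n d.support := by
    rw [← Finset.sum_fiberwise_of_maps_to hmaps]
    refine Finset.sum_congr rfl fun S _ ↦ ?_
    rw [Finset.sum_smul]
    exact Finset.sum_congr rfl fun d hd ↦ by rw [(Finset.mem_filter.1 hd).2]
  have hterm : ∀ d ∈ f.support, coeff d f • (monomial d 1 - xS r n d.support) ∈ J r :=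
    fun d hd ↦ Submodule.smul_of_tower_mem _ _
      (hdeg d hd ▸ monomial_sub_xS_mem_J d (hnonempty d hd))
  convert Ideal.sum_mem _ hterm using 1
  rw [hregroup]
  simp only [smul_sub, Finset.sum_sub_distrib, smul_monomial, smul_eq_mul, mul_one, ← f.as_sum]

/-- Every homogeneous polynomial of degree `n` in `F₂[t 1, …, t r]` is congruent, modulo the
ideal `J r`, to an `F₂`-linear combination of the monomials `xS r n S`, where `S` ranges over
the nonempty subsets of `{1,…,r}` of cardinality at most `n`. -/
theorem stmt_10 (r n : ℕ) (hr : 1 ≤ r) (hn : 1 ≤ n)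
    (f : MvPolynomial (Fin r) (ZMod 2)) (hf : f.IsHomogeneous n) :
    ∃ lam : Finset (Fin r) → ZMod 2,
      f - ∑ S ∈ Finset.univ.filter (fun S : Finset (Fin r) => S.Nonempty ∧ S.card ≤ n),
        lam S • xS r n S ∈ J r :=
  stmt_10_general r n hn f hf
end

section
/- Let r ≥ 1, n ≥ 1. For every nonempty subset S = {i_1 < i_2 < ⋯ < i_s} of {1,…,r} with s ≤ n, let x_S = t_{i_1}^{n−s+1} t_{i_2} ⋯ t_{i_s} ∈ F_2[t_1,…,t_r]. If coefficients λ_S ∈ F_2 satisfy Σ_S λ_S x_S ∈ J_r, then λ_S = 0 for all S. In other words, the images of the monomials x_S in F_2[t_1,…,t_r]/J_r are linearly independent over F_2. -/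
open MvPolynomial

/-! Over `F₂` every generator `a² b + a b² = 2 a b` of `J r` vanishes at every point of `F₂^r`,
so evaluating at the indicator point of `T ⊆ {1,…,r}`, where `x_S` takes the value `[S ⊆ T]`,
turns the hypothesis into `∑_{S ⊆ T} λ_S = 0` for every `T`. Inducting on `T` along strict
inclusion, these equations force every `λ_T` to vanish. -/

theorem Finset.eq_zero_of_sum_filter_subset_eq_zero {α M : Type*} [DecidableEq α]
    [AddCommMonoid M] (𝒮 : Finset (Finset α)) (c : Finset α → M)
    (h : ∀ T, ∑ S ∈ 𝒮 with S ⊆ T, c S = 0) :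
    ∀ S ∈ 𝒮, c S = 0 := by
  intro T
  induction T using Finset.strongInduction with
  | H T ih =>
    intro hT
    have hsum := h T
    rwa [Finset.sum_eq_single_of_mem T (by simp [hT]) fun S hS hne =>
      ih S ((Finset.mem_filter.1 hS).2.ssubset_of_ne hne) (Finset.mem_filter.1 hS).1] at hsum

theorem J_le_ker_eval {r : ℕ} (x : Fin r → ZMod 2) : J r ≤ RingHom.ker (eval x) := by
  rw [J, Ideal.span_le]
  rintro _ ⟨i, j, rfl⟩
  simp only [SetLike.mem_coe, RingHom.mem_ker, map_add, map_mul, map_pow, eval_X]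
  generalize x i = a; generalize x j = b
  revert a b; decide

theorem eval_indicator_xS {r : ℕ} (n : ℕ) (T S : Finset (Fin r)) (hS : S.Nonempty) :
    eval (fun i => if i ∈ T then 1 else 0) (xS r n S) = if S ⊆ T then 1 else 0 := by
  rw [xS, dif_pos hS, map_mul, map_pow, eval_X, map_prod]
  simp only [eval_X]
  rw [Finset.prod_boole]
  by_cases hST : S ⊆ T
  · rw [if_pos hST, if_pos fun i hi => hST hi, if_pos (hST (S.min'_mem hS)), one_pow, one_mul]
  · rw [if_neg hST, if_neg fun hall => hST fun i hi => hall i hi, zero_mul]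

theorem stmt_11_general (r n : ℕ) (lam : Finset (Fin r) → ZMod 2)
    (h : (∑ S ∈ Finset.univ.filter (fun S : Finset (Fin r) => S.Nonempty ∧ S.card ≤ n),
        lam S • xS r n S) ∈ J r) :
    ∀ S : Finset (Fin r), S.Nonempty → S.card ≤ n → lam S = 0 := by
  set 𝒮 := Finset.univ.filter (fun S : Finset (Fin r) => S.Nonempty ∧ S.card ≤ n)
  have hsubsets : ∀ T, ∑ S ∈ 𝒮 with S ⊆ T, lam S = 0 := by
    intro T
    have hT := J_le_ker_eval (fun i => if i ∈ T then 1 else 0) h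
    rw [RingHom.mem_ker, map_sum] at hT
    rw [Finset.sum_filter]
    refine (Finset.sum_congr rfl fun S hS => ?_).trans hT
    rw [smul_eval, eval_indicator_xS n T S (Finset.mem_filter.1 hS).2.1, mul_ite, mul_one,
      mul_zero]
  intro S hS hcard
  exact Finset.eq_zero_of_sum_filter_subset_eq_zero 𝒮 lam hsubsets S (by simp [𝒮, hS, hcard])

/-- The images of the monomials `xS r n S` in `F₂[t 1, …, t r]/J r` are linearly independent
over `F₂`, where `S` ranges over the nonempty subsets of `{1,…,r}` of cardinality at most
`n`: if an `F₂`-linear combination of them lies in `J r`, then all coefficients vanish. -/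
theorem stmt_11 (r n : ℕ) (hr : 1 ≤ r) (hn : 1 ≤ n) (lam : Finset (Fin r) → ZMod 2)
    (h : (∑ S ∈ Finset.univ.filter (fun S : Finset (Fin r) => S.Nonempty ∧ S.card ≤ n),
        lam S • xS r n S) ∈ J r) :
    ∀ S : Finset (Fin r), S.Nonempty → S.card ≤ n → lam S = 0 :=
  stmt_11_general r n lam h
end

section
/- Let r ≥ 1 and n ≥ 1, and let f ∈ F_2[t_1,…,t_r] be a homogeneous polynomial of degree n. Then f belongs to the ideal J_r if and only if Θ_n(f) = 0. (This is the paper's computation of its canonical ideal for an elementary abelian 2-group of rank r: the ideal {x : θ_{|x|}(x) = 0} of the polynomial cohomology ring F_2[t_1,…,t_r] is generated by the elements t_i² t_j + t_i t_j².) -/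
open MvPolynomial

/-- `ThetaMono r n a` is the value of the operation `Θ n` on the degree-`n` monomial
`∏ i, t i ^ a i`: the sum, over all families `(e (i, l))` of nonnegative integers indexed by
pairs `(i, l)` with `1 ≤ i ≤ r`, `1 ≤ l ≤ a i`, satisfying `∑ (i, l), 2 ^ e (i, l) = 2^(n-1)`,
of the monomials `∏ i, t i ^ (∑ l, 2 ^ e (i, l))`. -/
noncomputable def ThetaMono (r n : ℕ) (a : Fin r → ℕ) : MvPolynomial (Fin r) (ZMod 2) :=
  ∑ᶠ e : ((i : Fin r) × Fin (a i)) → ℕ,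
    if (∑ p : (i : Fin r) × Fin (a i), 2 ^ e p) = 2 ^ (n - 1) then
      ∏ i, X i ^ (∑ l : Fin (a i), 2 ^ e ⟨i, l⟩)
    else 0

/-- `Theta r n f` is the `F₂`-linear extension of `ThetaMono r n` to arbitrary polynomials,
i.e. the operation `Θ n` applied to `f`. -/
noncomputable def Theta (r n : ℕ) (f : MvPolynomial (Fin r) (ZMod 2)) :
    MvPolynomial (Fin r) (ZMod 2) :=
  ∑ a ∈ f.support, f.coeff a • ThetaMono r n (fun i => a i)

/-!
Let `σ(t) = t + t² + ⋯ + t^(2^(n-1))` be the trace polynomial. Expanding the product in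
the definition shows that `Θ_n(f)` is the degree-`2^(n-1)` part of `f(σ(t₁), …, σ(tᵣ))`.

Since `σ² + σ = t + t^(2^n)` in characteristic 2, substituting `σ` into `tᵢ²tⱼ + tᵢtⱼ²`
gives `(tᵢ + tᵢ^(2^n)) σ(tⱼ) + (tⱼ + tⱼ^(2^n)) σ(tᵢ)`. If `q` has degree `n - 3`, the
exponents of every monomial of `q(σ) σ(tⱼ)` have binary digit sums adding up to at most
`n - 2`, whereas `tᵢ` times such a monomial can only have degree `2^(n-1)` if the monomial
has degree `2^(n-1) - 1`, whose binary digits alone sum to `n - 1`. So `Θ_n` kills `J_r` in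
degree `n`.

Conversely, modulo `J_r` a monomial may move one unit of exponent between two variables of
its support, so every monomial of degree `n` is congruent to a canonical one depending only
on its support `S`. At a suitable witness exponent (distinct powers of two along `S`), the
coefficient of `Θ_n` of the canonical monomial of `S'` is `1` if `S' = S` and `0` otherwise.
Hence `Θ_n(f) = 0` forces every support class of monomials of `f` to have even size, and
then `f ∈ J_r`.
-/

open Finset

def binaryWeight (m : ℕ) : ℕ := (Nat.digits 2 m).sum

lemma binaryWeight_two_mul_add {b : ℕ} (hb : b < 2) (m : ℕ) :
    binaryWeight (2 * m + b) = b + binaryWeight m := by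
  rcases Nat.eq_zero_or_pos (2 * m + b) with h | h
  · obtain ⟨rfl, rfl⟩ : m = 0 ∧ b = 0 := by omega
    rfl
  · rw [binaryWeight, Nat.digits_def' one_lt_two h, List.sum_cons,
      show (2 * m + b) % 2 = b by omega, show (2 * m + b) / 2 = m by omega, binaryWeight]

lemma binaryWeight_two_mul (m : ℕ) : binaryWeight (2 * m) = binaryWeight m := by
  simpa using binaryWeight_two_mul_add two_pos m

lemma binaryWeight_two_pow (e : ℕ) : binaryWeight (2 ^ e) = 1 := by
  induction e with
  | zero => rfl
  | succ e ih => rw [pow_succ', binaryWeight_two_mul, ih]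

lemma binaryWeight_two_pow_sub_one (N : ℕ) : binaryWeight (2 ^ N - 1) = N := by
  induction N with
  | zero => rfl
  | succ N ih =>
    rw [show 2 ^ (N + 1) - 1 = 2 * (2 ^ N - 1) + 1 by have := N.one_le_two_pow; omega,
      binaryWeight_two_mul_add one_lt_two, ih, add_comm]

lemma binaryWeight_add_le (a b : ℕ) :
    binaryWeight (a + b) ≤ binaryWeight a + binaryWeight b := by
  induction h : a + b using Nat.strong_induction_on generalizing a b with
  | _ s ih =>
    subst h
    rcases Nat.eq_zero_or_pos (a + b) with h0 | h0
    · obtain ⟨rfl, rfl⟩ : a = 0 ∧ b = 0 := by omega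
      exact le_rfl
    obtain ⟨a', x, hx, rfl⟩ : ∃ a' x, x < 2 ∧ a = 2 * a' + x :=
      ⟨a / 2, a % 2, a.mod_lt two_pos, by omega⟩
    obtain ⟨b', y, hy, rfl⟩ : ∃ b' y, y < 2 ∧ b = 2 * b' + y :=
      ⟨b / 2, b % 2, b.mod_lt two_pos, by omega⟩
    rw [binaryWeight_two_mul_add hx, binaryWeight_two_mul_add hy]
    rcases Nat.lt_or_ge (x + y) 2 with hxy | hxy
    · rw [show 2 * a' + x + (2 * b' + y) = 2 * (a' + b') + (x + y) by ring,
        binaryWeight_two_mul_add hxy]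
      have := ih _ (by omega) a' b' rfl
      omega
    · obtain ⟨rfl, rfl⟩ : x = 1 ∧ y = 1 := by omega
      rw [show 2 * a' + 1 + (2 * b' + 1) = 2 * (a' + b' + 1) + 0 by ring,
        binaryWeight_two_mul_add two_pos]
      have h1 := ih _ (by omega) (a' + b') 1 rfl
      have h2 := ih _ (by omega) a' b' rfl
      have h3 : binaryWeight 1 = 1 := binaryWeight_two_pow 0
      omega

lemma binaryWeight_sum_le {ι : Type*} (s : Finset ι) (f : ι → ℕ) :
    binaryWeight (∑ i ∈ s, f i) ≤ ∑ i ∈ s, binaryWeight (f i) := by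
  classical
  induction s using Finset.induction_on with
  | empty => exact le_rfl
  | insert a s ha ih =>
    rw [sum_insert ha, sum_insert ha]
    exact (binaryWeight_add_le _ _).trans (by omega)

lemma sum_range_two_pow_add_add_two_pow (c m : ℕ) :
    ∑ k ∈ range m, 2 ^ (c + k) + 2 ^ c = 2 ^ (c + m) := by
  induction m with
  | zero => simp
  | succ m ih => rw [sum_range_succ, add_right_comm, ih, ← add_assoc, pow_succ]; ring

section TracePoly

open Polynomial (expand coeff_expand coeff_expand_mul')

noncomputable def tracePoly (n : ℕ) : Polynomial (ZMod 2) :=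
  ∑ c ∈ range n, Polynomial.X ^ 2 ^ c

variable {n : ℕ}

lemma tracePoly_sq (n : ℕ) : tracePoly n ^ 2 = expand (ZMod 2) 2 (tracePoly n) :=
  (ZMod.expand_card _).symm

lemma tracePoly_add_X_pow (n : ℕ) :
    tracePoly n + Polynomial.X ^ 2 ^ n = Polynomial.X + expand (ZMod 2) 2 (tracePoly n) := by
  simp only [tracePoly, map_sum, map_pow, Polynomial.expand_X, ← pow_mul, ← pow_succ']
  rw [← sum_range_succ (fun c => Polynomial.X ^ 2 ^ c), sum_range_succ', pow_zero, pow_one,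
    add_comm]

lemma tracePoly_sq_add_tracePoly (n : ℕ) :
    tracePoly n ^ 2 + tracePoly n = Polynomial.X + Polynomial.X ^ 2 ^ n := by
  have h2 : (2 : Polynomial (ZMod 2)) = 0 := CharTwo.two_eq_zero
  linear_combination tracePoly_sq n - tracePoly_add_X_pow n + (tracePoly n - Polynomial.X) * h2

lemma coeff_zero_tracePoly_pow {m : ℕ} (hm : m ≠ 0) : (tracePoly n ^ m).coeff 0 = 0 := by
  simp [Polynomial.coeff_zero_eq_eval_zero, tracePoly, Polynomial.eval_finsetSum, hm]

lemma coeff_tracePoly_pow_two_mul {b : ℕ} (hb : 2 * b < 2 ^ n) (m : ℕ) :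
    (tracePoly n ^ m).coeff (2 * b) = (tracePoly n ^ ((m + 1) / 2)).coeff b := by
  obtain ⟨k, rfl | rfl⟩ := Nat.even_or_odd' m
  · rw [pow_mul, tracePoly_sq, ← map_pow, coeff_expand_mul' two_pos,
      show (2 * k + 1) / 2 = k by omega]
  · have hσ : tracePoly n =
        Polynomial.X + Polynomial.X ^ 2 ^ n + expand (ZMod 2) 2 (tracePoly n) := by
      have h2 : (2 : Polynomial (ZMod 2)) = 0 := CharTwo.two_eq_zero
      linear_combination tracePoly_add_X_pow n - Polynomial.X ^ 2 ^ n * h2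
    have hodd : (Polynomial.X * expand (ZMod 2) 2 (tracePoly n ^ k)).coeff (2 * b) = 0 := by
      rcases b with _ | b
      · exact Polynomial.coeff_X_mul_zero _
      · rw [show 2 * (b + 1) = 2 * b + 1 + 1 by ring, Polynomial.coeff_X_mul, coeff_expand two_pos,
          if_neg (by omega)]
    have hsplit : tracePoly n ^ (2 * k + 1) = Polynomial.X * expand (ZMod 2) 2 (tracePoly n ^ k) +
        Polynomial.X ^ 2 ^ n * expand (ZMod 2) 2 (tracePoly n ^ k) +
        expand (ZMod 2) 2 (tracePoly n ^ (k + 1)) := by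
      rw [pow_succ, pow_mul, tracePoly_sq, ← map_pow, pow_succ, map_mul]
      linear_combination expand (ZMod 2) 2 (tracePoly n ^ k) * hσ
    rw [hsplit, Polynomial.coeff_add, Polynomial.coeff_add, hodd, Polynomial.coeff_X_pow_mul',
      if_neg (by omega), coeff_expand_mul' two_pos, show (2 * k + 1 + 1) / 2 = k + 1 by omega,
      zero_add, zero_add]

lemma coeff_tracePoly_pow_two_pow {m t : ℕ} (ht : t < n) (hm : 1 ≤ m) (hmt : m ≤ 2 ^ t) :
    (tracePoly n ^ m).coeff (2 ^ t) = 1 := by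
  induction t generalizing m with
  | zero =>
    obtain rfl : m = 1 := by simpa using le_antisymm hmt hm
    have h := congrArg (Polynomial.coeff · 1) (tracePoly_add_X_pow n)
    simp only [Polynomial.coeff_add, Polynomial.coeff_X_one, Polynomial.coeff_X_pow,
      coeff_expand two_pos] at h
    simpa [show 1 ≠ 2 ^ n from (Nat.one_lt_two_pow ht.ne').ne] using h
  | succ t ih =>
    rw [pow_succ', coeff_tracePoly_pow_two_mul
      (by rw [← pow_succ']; exact Nat.pow_lt_pow_right one_lt_two ht)]
    exact ih (by omega) (by omega) (by rw [pow_succ] at hmt; omega)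

end TracePoly

lemma aeval_X_tracePoly {σ : Type*} (n : ℕ) (i : σ) :
    Polynomial.aeval (X i) (tracePoly n) =
      ∑ c ∈ range n, (X i : MvPolynomial σ (ZMod 2)) ^ 2 ^ c := by
  simp [tracePoly]

lemma thetaMono_eq_homogeneousComponent {r n : ℕ} (hn : n ≠ 0) (a : Fin r → ℕ) :
    ThetaMono r n a = homogeneousComponent (2 ^ (n - 1))
      (∏ i, Polynomial.aeval (X i) (tracePoly n) ^ a i) := by
  classical
  have hsupp : (Function.support fun e : ((i : Fin r) × Fin (a i)) → ℕ =>
      if ∑ p, 2 ^ e p = 2 ^ (n - 1) then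
        ∏ i, (X i : MvPolynomial (Fin r) (ZMod 2)) ^ ∑ l, 2 ^ e ⟨i, l⟩
      else 0) ⊆ ↑(Fintype.piFinset fun _ : (i : Fin r) × Fin (a i) => range n) := by
    intro e he
    have hsum : ∑ p, 2 ^ e p = 2 ^ (n - 1) := by by_contra h; simp [h] at he
    simp only [mem_coe, Fintype.mem_piFinset, mem_range]
    intro p
    have := hsum ▸ single_le_sum (f := fun p => 2 ^ e p) (fun _ _ => Nat.zero_le _) (mem_univ p)
    have := (Nat.pow_le_pow_iff_right (le_refl 2)).mp this
    omega
  have hprod : ∏ i, Polynomial.aeval (X i) (tracePoly n) ^ a i =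
      ∏ p : (i : Fin r) × Fin (a i),
        ∑ c ∈ range n, (X p.1 : MvPolynomial (Fin r) (ZMod 2)) ^ 2 ^ c := by
    simp [Fintype.prod_sigma, aeval_X_tracePoly]
  rw [ThetaMono, finsum_eq_sum_of_support_subset _ hsupp, hprod, prod_univ_sum, map_sum]
  refine sum_congr rfl fun e _ => ?_
  have hhom : IsHomogeneous (∏ p, (X p.1 : MvPolynomial (Fin r) (ZMod 2)) ^ 2 ^ e p)
      (∑ p, 2 ^ e p) :=
    IsHomogeneous.prod _ _ _ fun p _ => isHomogeneous_X_pow _ _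
  rw [homogeneousComponent_of_mem hhom, eq_comm]
  congr 1
  · exact propext eq_comm
  · simp [Fintype.prod_sigma, prod_pow_eq_pow_sum]

noncomputable def traceSubst {σ : Type*} (n : ℕ) :
    MvPolynomial σ (ZMod 2) →ₐ[ZMod 2] MvPolynomial σ (ZMod 2) :=
  aeval fun i => Polynomial.aeval (X i) (tracePoly n)

lemma theta_eq_homogeneousComponent {r n : ℕ} (hn : n ≠ 0) (f : MvPolynomial (Fin r) (ZMod 2)) :
    Theta r n f = homogeneousComponent (2 ^ (n - 1)) (traceSubst n f) := by
  rw [Theta, traceSubst, aeval_def, eval₂_eq', map_sum]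
  refine sum_congr rfl fun a _ => ?_
  rw [thetaMono_eq_homogeneousComponent hn, ← Algebra.smul_def, map_smul]

lemma theta_zero {r n : ℕ} : Theta r n 0 = 0 := by
  simp [Theta]

lemma theta_add {r n : ℕ} (hn : n ≠ 0) (f g : MvPolynomial (Fin r) (ZMod 2)) :
    Theta r n (f + g) = Theta r n f + Theta r n g := by
  simp only [theta_eq_homogeneousComponent hn, map_add]

lemma theta_sum {r n : ℕ} (hn : n ≠ 0) {κ : Type*} (s : Finset κ)
    (f : κ → MvPolynomial (Fin r) (ZMod 2)) :
    Theta r n (∑ k ∈ s, f k) = ∑ k ∈ s, Theta r n (f k) := by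
  simp only [theta_eq_homogeneousComponent hn, map_sum]

section Weight

variable {ι R : Type*} [Fintype ι] [CommSemiring R]

def totalBinaryWeight (u : ι →₀ ℕ) : ℕ := ∑ i, binaryWeight (u i)

lemma totalBinaryWeight_add_le (u v : ι →₀ ℕ) :
    totalBinaryWeight (u + v) ≤ totalBinaryWeight u + totalBinaryWeight v := by
  rw [totalBinaryWeight, totalBinaryWeight, totalBinaryWeight, ← sum_add_distrib]
  exact sum_le_sum fun i _ => binaryWeight_add_le _ _

lemma binaryWeight_degree_le (u : ι →₀ ℕ) : binaryWeight u.degree ≤ totalBinaryWeight u := by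
  rw [Finsupp.degree_eq_sum]
  exact binaryWeight_sum_le _ _

def BinaryWeightLE (m : ℕ) (p : MvPolynomial ι R) : Prop :=
  ∀ u ∈ p.support, totalBinaryWeight u ≤ m

lemma binaryWeightLE_C (a : R) : BinaryWeightLE 0 (C a : MvPolynomial ι R) := by
  classical
  intro u hu
  obtain rfl : u = 0 := by
    by_contra h
    exact mem_support_iff.mp hu (by rw [coeff_C, if_neg (Ne.symm h)])
  simp [totalBinaryWeight, binaryWeight]

namespace BinaryWeightLE

variable {m m' : ℕ} {p q : MvPolynomial ι R}

lemma mono (hp : BinaryWeightLE m p) (h : m ≤ m') : BinaryWeightLE m' p :=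
  fun u hu => (hp u hu).trans h

lemma add (hp : BinaryWeightLE m p) (hq : BinaryWeightLE m q) : BinaryWeightLE m (p + q) := by
  classical
  intro u hu
  rcases mem_union.mp (support_add hu) with h | h
  exacts [hp u h, hq u h]

lemma mul (hp : BinaryWeightLE m p) (hq : BinaryWeightLE m' q) :
    BinaryWeightLE (m + m') (p * q) := by
  classical
  intro u hu
  obtain ⟨a, ha, b, hb, rfl⟩ := mem_add.mp (support_mul p q hu)
  exact (totalBinaryWeight_add_le a b).trans (add_le_add (hp a ha) (hq b hb))

lemma sum {κ : Type*} (s : Finset κ) {f : κ → MvPolynomial ι R}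
    (hf : ∀ k ∈ s, BinaryWeightLE m (f k)) : BinaryWeightLE m (∑ k ∈ s, f k) := by
  classical
  induction s using Finset.induction_on with
  | empty => simp [BinaryWeightLE]
  | insert a s ha ih =>
    rw [sum_insert ha]
    exact (hf a (mem_insert_self a s)).add (ih fun k hk => hf k (mem_insert_of_mem hk))

lemma prod {κ : Type*} (s : Finset κ) {f : κ → MvPolynomial ι R} {w : κ → ℕ}
    (hf : ∀ k ∈ s, BinaryWeightLE (w k) (f k)) :
    BinaryWeightLE (∑ k ∈ s, w k) (∏ k ∈ s, f k) := by
  classical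
  induction s using Finset.induction_on with
  | empty => simpa using binaryWeightLE_C (1 : R)
  | insert a s ha ih =>
    rw [sum_insert ha, prod_insert ha]
    exact (hf a (mem_insert_self a s)).mul (ih fun k hk => hf k (mem_insert_of_mem hk))

lemma pow (hp : BinaryWeightLE m p) (k : ℕ) : BinaryWeightLE (k * m) (p ^ k) := by
  simpa using BinaryWeightLE.prod (range k) fun _ _ => hp

end BinaryWeightLE

lemma binaryWeightLE_X_pow_two_pow (i : ι) (c : ℕ) :
    BinaryWeightLE 1 (X i ^ 2 ^ c : MvPolynomial ι R) := by
  classical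
  intro u hu
  rw [X_pow_eq_monomial] at hu
  obtain rfl := mem_singleton.mp (support_monomial_subset hu)
  rw [totalBinaryWeight, sum_eq_single i (fun j _ hj => by simp [Ne.symm hj, binaryWeight])
    (by simp), Finsupp.single_eq_same, binaryWeight_two_pow]

lemma binaryWeightLE_traceSubst (n : ℕ) (q : MvPolynomial ι (ZMod 2)) :
    BinaryWeightLE q.totalDegree (traceSubst n q) := by
  rw [traceSubst, aeval_def, eval₂_eq']
  refine BinaryWeightLE.sum _ fun d hd => ?_
  have hσ : ∀ i, BinaryWeightLE 1
      (Polynomial.aeval (X i) (tracePoly n) : MvPolynomial ι (ZMod 2)) := fun i => by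
    rw [aeval_X_tracePoly]
    exact BinaryWeightLE.sum _ fun c _ => binaryWeightLE_X_pow_two_pow i c
  have hprod := BinaryWeightLE.prod univ fun i _ => (hσ i).pow (d i)
  simp only [mul_one, ← Finsupp.degree_eq_sum] at hprod
  refine ((binaryWeightLE_C _).mul hprod).mono ?_
  rw [zero_add]
  exact le_totalDegree hd

end Weight

section HomogeneousComponent

variable {ι R : Type*} [CommSemiring R]

lemma homogeneousComponent_X_pow_mul_eq_zero {k m : ℕ} (h : k < m) (i : ι)
    (p : MvPolynomial ι R) :
    homogeneousComponent k (X i ^ m * p) = 0 := by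
  classical
  refine homogeneousComponent_eq_zero' _ _ fun d hd hdeg => ?_
  rw [mem_support_iff, X_pow_eq_monomial, coeff_monomial_mul'] at hd
  split_ifs at hd with hle
  · have := Finsupp.degree_mono hle
    rw [Finsupp.degree_single] at this
    omega
  · exact hd rfl

lemma homogeneousComponent_two_pow_X_mul_eq_zero [Fintype ι] {m N : ℕ} {p : MvPolynomial ι R}
    (hp : BinaryWeightLE m p) (hm : m < N) (i : ι) :
    homogeneousComponent (2 ^ N) (X i * p) = 0 := by
  refine homogeneousComponent_eq_zero' _ _ fun d hd hdeg => ?_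
  rw [support_X_mul] at hd
  obtain ⟨e, he, rfl⟩ := mem_map.mp hd
  have hdeg' : e.degree = 2 ^ N - 1 := by
    simp only [addLeftEmbedding_apply, map_add, Finsupp.degree_single] at hdeg
    omega
  have := binaryWeight_degree_le e
  rw [hdeg', binaryWeight_two_pow_sub_one] at this
  exact absurd (this.trans (hp e he)) (by omega)

end HomogeneousComponent

lemma traceSubst_generator {σ : Type*} (n : ℕ) (i j : σ) :
    traceSubst n (X i ^ 2 * X j + X i * X j ^ 2 : MvPolynomial σ (ZMod 2)) =
      X i * traceSubst n (X j) + X i ^ 2 ^ n * traceSubst n (X j) +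
        (X j * traceSubst n (X i) + X j ^ 2 ^ n * traceSubst n (X i)) := by
  have hsq : ∀ k : σ, traceSubst n (X k) ^ 2 + traceSubst n (X k) = X k + X k ^ 2 ^ n :=
    fun k => by
    simpa [traceSubst] using congrArg (Polynomial.aeval (X k : MvPolynomial σ (ZMod 2)))
      (tracePoly_sq_add_tracePoly n)
  have h2 : (2 : MvPolynomial σ (ZMod 2)) = 0 := CharTwo.two_eq_zero
  simp only [map_add, map_mul, map_pow]
  linear_combination traceSubst n (X j) * hsq i + traceSubst n (X i) * hsq j -
    traceSubst n (X i) * traceSubst n (X j) * h2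

lemma theta_mul_generator_eq_zero {r n : ℕ} {q : MvPolynomial (Fin r) (ZMod 2)}
    (hq : q.totalDegree + 3 ≤ n) (i j : Fin r) :
    Theta r n (q * (X i ^ 2 * X j + X i * X j ^ 2)) = 0 := by
  have hQ := binaryWeightLE_traceSubst n q
  have hlow : ∀ k l : Fin r,
      homogeneousComponent (2 ^ (n - 1)) (traceSubst n q * (X k * traceSubst n (X l))) = 0 :=
    fun k l => by
      rw [mul_left_comm]
      exact homogeneousComponent_two_pow_X_mul_eq_zero
        (hQ.mul (binaryWeightLE_traceSubst n (X l))) (by rw [totalDegree_X]; omega) k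
  have hhigh : ∀ k l : Fin r, homogeneousComponent (2 ^ (n - 1))
      (traceSubst n q * (X k ^ 2 ^ n * traceSubst n (X l))) = 0 :=
    fun k l => by
      rw [mul_left_comm]
      exact homogeneousComponent_X_pow_mul_eq_zero (Nat.pow_lt_pow_right one_lt_two (by omega)) k _
  rw [theta_eq_homogeneousComponent (by omega), map_mul, traceSubst_generator]
  simp only [mul_add, map_add, hlow, hhigh, add_zero]

lemma theta_homogeneousComponent_mul_eq_zero {r n : ℕ} (hn : n ≠ 0)
    {g : MvPolynomial (Fin r) (ZMod 2)} (hg : g ∈ J r) (q : MvPolynomial (Fin r) (ZMod 2)) :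
    Theta r n (homogeneousComponent n (q * g)) = 0 := by
  induction hg using Submodule.span_induction generalizing q with
  | mem g hg =>
    obtain ⟨i, j, rfl⟩ := hg
    have hgen : (X i ^ 2 * X j + X i * X j ^ 2 : MvPolynomial (Fin r) (ZMod 2)).IsHomogeneous 3 :=
      ((isHomogeneous_X_pow i 2).mul (isHomogeneous_X _ j)).add
        ((isHomogeneous_X _ i).mul (isHomogeneous_X_pow j 2))
    induction q using MvPolynomial.induction_on' with
    | monomial v c =>
      have hv := isHomogeneous_monomial c (rfl : v.degree = v.degree)
      rw [homogeneousComponent_of_mem (hv.mul hgen)]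
      split_ifs with h
      · exact theta_mul_generator_eq_zero (by have := hv.totalDegree_le; omega) i j
      · exact theta_zero
    | add p q hp hq => rw [add_mul, map_add, theta_add hn, hp, hq, add_zero]
  | zero => simpa using theta_zero
  | add x y _ _ hx hy => rw [mul_add, map_add, theta_add hn, hx, hy, add_zero]
  | smul a x _ hx => rw [smul_eq_mul, mul_left_comm, ← mul_assoc]; exact hx _

lemma theta_eq_zero_of_mem_J {r n : ℕ} (hn : n ≠ 0) {f : MvPolynomial (Fin r) (ZMod 2)}
    (hf : f.IsHomogeneous n) (hJ : f ∈ J r) : Theta r n f = 0 := by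
  simpa [homogeneousComponent_eq_self hf] using theta_homogeneousComponent_mul_eq_zero hn hJ 1

lemma coeff_prod_aeval_X {ι R : Type*} [Fintype ι] [CommSemiring R] (p : ι → Polynomial R)
    (w : ι →₀ ℕ) :
    coeff w (∏ i, Polynomial.aeval (X i : MvPolynomial ι R) (p i)) =
      ∏ i, (p i).coeff (w i) := by
  classical
  have hexp : ∀ i, Polynomial.aeval (X i : MvPolynomial ι R) (p i) =
      ∑ k ∈ (p i).support, monomial (Finsupp.single i k) ((p i).coeff k) := fun i => by
    conv_lhs => rw [(p i).as_sum_support]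
    simp [map_sum, Polynomial.aeval_monomial, X_pow_eq_monomial, C_mul_monomial]
  have hcond : ∀ x : ι → ℕ, (∑ i, Finsupp.single i (x i) = w ↔ x = w) := fun x => by
    rw [← Finsupp.equivFunOnFinite_symm_eq_sum, Equiv.symm_apply_eq]
    rfl
  simp_rw [hexp, prod_univ_sum, ← monomial_sum_prod, coeff_sum, coeff_monomial, hcond,
    sum_ite_eq', Fintype.mem_piFinset, Polynomial.mem_support_iff]
  split_ifs with h
  · rfl
  · obtain ⟨i, hi⟩ := not_forall.mp h
    exact (prod_eq_zero (mem_univ i) (not_not.mp hi)).symm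

lemma coeff_theta_monomial {r n : ℕ} (hn : n ≠ 0) (u : Fin r →₀ ℕ) {w : Fin r →₀ ℕ}
    (hw : w.degree = 2 ^ (n - 1)) :
    coeff w (Theta r n (monomial u 1)) = ∏ i, (tracePoly n ^ u i).coeff (w i) := by
  rw [theta_eq_homogeneousComponent hn, coeff_homogeneousComponent, if_pos hw, traceSubst,
    aeval_monomial, map_one, one_mul, Finsupp.prod_fintype _ _ fun _ => pow_zero _]
  simp_rw [← map_pow]
  exact coeff_prod_aeval_X _ w

lemma prod_coeff_tracePoly_pow_eq_zero {ι : Type*} [Fintype ι] {n : ℕ} {u w : ι →₀ ℕ}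
    (h : u.support ≠ w.support) : ∏ i, (tracePoly n ^ u i).coeff (w i) = 0 := by
  obtain ⟨i, hi⟩ : ∃ i, ¬(u i = 0 ↔ w i = 0) := by
    by_contra! h'
    exact h (Finset.ext fun i => by simpa [not_iff_not] using h' i)
  refine prod_eq_zero (mem_univ i) ?_
  by_cases hu : u i = 0
  · rw [hu, pow_zero, Polynomial.coeff_one, if_neg fun h => hi (iff_of_true hu h)]
  · rw [show w i = 0 by tauto, coeff_zero_tracePoly_pow hu]

lemma monomial_mul_X_add_monomial_mul_X_mem_J {r : ℕ} {u : Fin r →₀ ℕ} {i j : Fin r}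
    (hi : i ∈ u.support) (hj : j ∈ u.support) :
    monomial u 1 * X i + monomial u 1 * X j ∈ J r := by
  rcases eq_or_ne i j with rfl | hij
  · rw [CharTwo.add_self_eq_zero]
    exact zero_mem _
  rw [Finsupp.mem_support_iff] at hi hj
  obtain ⟨v, rfl⟩ : ∃ v, u = v + Finsupp.single i 1 + Finsupp.single j 1 :=
    ⟨u - Finsupp.single i 1 - Finsupp.single j 1, by
      ext k
      simp only [Finsupp.coe_add, Finsupp.coe_tsub, Pi.add_apply, Pi.sub_apply,
        Finsupp.single_apply]
      split_ifs <;> simp_all <;> omega⟩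
  rw [monomial_add_single, monomial_add_single, pow_one, pow_one,
    show monomial v 1 * X i * X j * X i + monomial v 1 * X i * X j * X j =
      monomial v (1 : ZMod 2) * (X i ^ 2 * X j + X i * X j ^ 2) by ring]
  exact Ideal.mul_mem_left _ _ (Ideal.subset_span ⟨i, j, rfl⟩)

lemma Finsupp.eq_of_support_eq_of_degree_eq_of_le_one {ι : Type*} {u v : ι →₀ ℕ}
    (hsupp : u.support = v.support) (hdeg : u.degree = v.degree) (hu : ∀ i, u i ≤ 1) :
    u = v := by
  have hu1 : ∀ i ∈ u.support, u i = 1 := fun i hi =>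
    le_antisymm (hu i) (Nat.one_le_iff_ne_zero.mpr (Finsupp.mem_support_iff.mp hi))
  have hv1 : ∀ i ∈ u.support, 1 = v i := by
    refine (sum_eq_sum_iff_of_le fun i hi =>
      Nat.one_le_iff_ne_zero.mpr (Finsupp.mem_support_iff.mp (hsupp ▸ hi))).mp ?_
    rw [← Finset.sum_congr rfl hu1, ← Finsupp.degree_apply, hdeg, Finsupp.degree_apply, hsupp]
  ext i
  by_cases hi : i ∈ u.support
  · rw [hu1 i hi, hv1 i hi]
  · rw [Finsupp.notMem_support_iff.mp hi, Finsupp.notMem_support_iff.mp (hsupp ▸ hi)]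

lemma Finsupp.support_add_single_of_mem {ι : Type*} {u : ι →₀ ℕ} {i : ι}
    (hi : i ∈ u.support) :
    (u + Finsupp.single i 1).support = u.support := by
  classical
  ext k
  rw [Finsupp.mem_support_iff] at hi
  simp only [Finsupp.mem_support_iff, Finsupp.coe_add, Pi.add_apply, Finsupp.single_apply]
  split_ifs with h <;> [subst h; skip] <;> omega

lemma Finsupp.card_support_le_degree_s14 {ι : Type*} (u : ι →₀ ℕ) :
    #u.support ≤ u.degree := by
  rw [card_eq_sum_ones, Finsupp.degree_apply]
  exact Finset.sum_le_sum fun i hi => Nat.one_le_iff_ne_zero.mpr (Finsupp.mem_support_iff.mp hi)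

lemma monomial_add_monomial_mem_J {r : ℕ} {u v : Fin r →₀ ℕ} (hsupp : u.support = v.support)
    (hdeg : u.degree = v.degree) : monomial u 1 + monomial v 1 ∈ J r := by
  induction hd : u.degree using Nat.strong_induction_on generalizing u v with
  | _ d ih =>
    by_cases hu : ∀ i, u i ≤ 1
    · rw [Finsupp.eq_of_support_eq_of_degree_eq_of_le_one hsupp hdeg hu, CharTwo.add_self_eq_zero]
      exact zero_mem _
    by_cases hv : ∀ i, v i ≤ 1
    · rw [Finsupp.eq_of_support_eq_of_degree_eq_of_le_one hsupp.symm hdeg.symm hv,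
        CharTwo.add_self_eq_zero]
      exact zero_mem _
    obtain ⟨i, hi⟩ := not_forall.mp hu
    obtain ⟨j, hj⟩ := not_forall.mp hv
    obtain ⟨u, rfl⟩ : ∃ u', u = u' + Finsupp.single i 1 :=
      ⟨_, (tsub_add_cancel_of_le (Finsupp.single_le_iff.mpr (by omega))).symm⟩
    obtain ⟨v, rfl⟩ : ∃ v', v = v' + Finsupp.single j 1 :=
      ⟨_, (tsub_add_cancel_of_le (Finsupp.single_le_iff.mpr (by omega))).symm⟩
    have hui : i ∈ u.support := Finsupp.mem_support_iff.mpr (by simp at hi; omega)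
    have hvj : j ∈ v.support := Finsupp.mem_support_iff.mpr (by simp at hj; omega)
    rw [Finsupp.support_add_single_of_mem hui, Finsupp.support_add_single_of_mem hvj] at hsupp
    simp only [map_add, Finsupp.degree_single] at hdeg hd
    have h2 : (2 : MvPolynomial (Fin r) (ZMod 2)) = 0 := CharTwo.two_eq_zero
    rw [monomial_add_single, monomial_add_single, pow_one, pow_one,
      show monomial u 1 * X i + monomial v 1 * X j = (monomial u 1 + monomial v 1) * X i +
          (monomial v 1 * X i + monomial v (1 : ZMod 2) * X j) by
        linear_combination -(monomial v 1 * X i) * h2]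
    exact add_mem (Ideal.mul_mem_right _ _ (ih _ (by omega) hsupp (by omega) rfl))
      (monomial_mul_X_add_monomial_mul_X_mem_J (hsupp ▸ hui) hvj)

section CanonicalMonomial

variable {ι : Type*} [LinearOrder ι]

lemma support_embDomain_orderEmbOfFin {S : Finset ι} {g : Fin #S → ℕ} (hg : ∀ k, g k ≠ 0) :
    (Finsupp.embDomain (S.orderEmbOfFin rfl).toEmbedding (Finsupp.equivFunOnFinite.symm g)).support
      = S := by
  rw [Finsupp.support_embDomain]
  conv_rhs => rw [← S.map_orderEmbOfFin_univ rfl]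
  congr
  ext k
  simpa using hg k

lemma degree_embDomain_orderEmbOfFin (S : Finset ι) (g : Fin #S → ℕ) :
    (Finsupp.embDomain (S.orderEmbOfFin rfl).toEmbedding (Finsupp.equivFunOnFinite.symm g)).degree
      = ∑ k, g k := by
  rw [Finsupp.embDomain_eq_mapDomain, Finsupp.degree_mapDomain, Finsupp.degree_eq_sum]
  rfl

/-- The exponents of `t_{x₀} ^ (n + 1 - #S) * ∏_{x ∈ S \ {x₀}} t_x`, where `x₀ = min S`. -/
noncomputable def canonicalExp (n : ℕ) (S : Finset ι) : ι →₀ ℕ :=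
  Finsupp.embDomain (S.orderEmbOfFin rfl).toEmbedding
    (Finsupp.equivFunOnFinite.symm fun k => if (k : ℕ) = 0 then n + 1 - #S else 1)

/-- Listing `S` increasingly, the exponents `2^(n-#S), 2^(n-#S), 2^(n-#S+1), …, 2^(n-2)`;
they add up to `2^(n-1)`. -/
noncomputable def witnessExp (n : ℕ) (S : Finset ι) : ι →₀ ℕ :=
  Finsupp.embDomain (S.orderEmbOfFin rfl).toEmbedding
    (Finsupp.equivFunOnFinite.symm fun k =>
      if (k : ℕ) = 0 then 2 ^ (n - #S) else 2 ^ (n - #S + k - 1))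

variable {n : ℕ} {S : Finset ι}

lemma support_canonicalExp (hSn : #S ≤ n) : (canonicalExp n S).support = S :=
  support_embDomain_orderEmbOfFin fun k => by split_ifs <;> omega

lemma degree_canonicalExp (hS : S.Nonempty) (hSn : #S ≤ n) : (canonicalExp n S).degree = n := by
  obtain ⟨s, hs⟩ : ∃ s, #S = s + 1 := Nat.exists_eq_add_one.mpr hS.card_pos
  rw [canonicalExp, degree_embDomain_orderEmbOfFin,
    Fin.sum_univ_eq_sum_range (fun k => if k = 0 then n + 1 - #S else 1), hs, sum_range_succ']
  simp
  omega

lemma support_witnessExp : (witnessExp n S).support = S :=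
  support_embDomain_orderEmbOfFin fun k => by split_ifs <;> positivity

lemma degree_witnessExp (hS : S.Nonempty) (hSn : #S ≤ n) :
    (witnessExp n S).degree = 2 ^ (n - 1) := by
  obtain ⟨s, hs⟩ : ∃ s, #S = s + 1 := Nat.exists_eq_add_one.mpr hS.card_pos
  rw [witnessExp, degree_embDomain_orderEmbOfFin,
    Fin.sum_univ_eq_sum_range (fun k => if k = 0 then 2 ^ (n - #S) else 2 ^ (n - #S + k - 1)),
    hs, sum_range_succ']
  simp only [add_eq_zero, one_ne_zero, and_false, if_false, if_true, ← add_assoc,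
    Nat.add_sub_cancel]
  rw [sum_range_two_pow_add_add_two_pow]
  congr 1
  omega

lemma prod_coeff_witnessExp_canonicalExp [Fintype ι] (hSn : #S ≤ n) :
    ∏ i, (tracePoly n ^ canonicalExp n S i).coeff (witnessExp n S i) = 1 := by
  refine prod_eq_one fun i _ => ?_
  by_cases hi : i ∈ Set.range (S.orderEmbOfFin rfl).toEmbedding
  · obtain ⟨k, rfl⟩ := hi
    have hk : (k : ℕ) < #S := k.is_lt
    simp only [canonicalExp, witnessExp, Finsupp.embDomain_apply_self,
      Finsupp.coe_equivFunOnFinite_symm]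
    split_ifs with h0
    · exact coeff_tracePoly_pow_two_pow (by omega) (by omega)
        (by have := (n - #S).lt_two_pow_self; omega)
    · simpa using coeff_tracePoly_pow_two_pow (n := n) (m := 1) (t := n - #S + k - 1) (by omega)
        le_rfl Nat.one_le_two_pow
  · simp [canonicalExp, witnessExp, Finsupp.embDomain_of_notMem_range _ _ _ hi]

end CanonicalMonomial

lemma eq_sum_monomial_one {σ : Type*} (f : MvPolynomial σ (ZMod 2)) :
    f = ∑ u ∈ f.support, monomial u 1 := by
  conv_lhs => rw [f.as_sum]
  refine Finset.sum_congr rfl fun u hu => ?_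
  have : ∀ x : ZMod 2, x ≠ 0 → x = 1 := by decide
  rw [this _ (mem_support_iff.mp hu)]

lemma coeff_witnessExp_theta_canonicalExp {r n : ℕ} (hn : n ≠ 0) {S T : Finset (Fin r)}
    (hS : S.Nonempty) (hSn : #S ≤ n) (hTn : #T ≤ n) :
    coeff (witnessExp n S) (Theta r n (monomial (canonicalExp n T) 1)) =
      if T = S then 1 else 0 := by
  rw [coeff_theta_monomial hn _ (degree_witnessExp hS hSn)]
  split_ifs with h
  · subst h
    exact prod_coeff_witnessExp_canonicalExp hSn
  · exact prod_coeff_tracePoly_pow_eq_zero (by rwa [support_canonicalExp hTn, support_witnessExp])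

lemma sum_monomial_canonicalExp_eq_zero {r n : ℕ} (hn : n ≠ 0) {s : Finset (Fin r →₀ ℕ)}
    (hs : ∀ u ∈ s, u.support.Nonempty ∧ #u.support ≤ n)
    (hθ : Theta r n (∑ u ∈ s, monomial (canonicalExp n u.support) 1) = 0) :
    ∑ u ∈ s, monomial (canonicalExp n u.support) (1 : ZMod 2) = 0 := by
  classical
  rw [sum_comp (fun S => monomial (canonicalExp n S) (1 : ZMod 2)) Finsupp.support]
  refine sum_eq_zero fun S hS => ?_
  obtain ⟨u, hu, rfl⟩ := mem_image.mp hS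
  have hcount : (#{v ∈ s | v.support = u.support} : ZMod 2) = 0 := by
    have := congrArg (coeff (witnessExp n u.support)) hθ
    rw [theta_sum hn, coeff_sum, coeff_zero] at this
    rw [← sum_boole]
    refine (sum_congr rfl fun v hv => ?_).trans this
    exact (coeff_witnessExp_theta_canonicalExp hn (hs u hu).1 (hs u hu).2 (hs v hv).2).symm
  rw [← Nat.cast_smul_eq_nsmul (ZMod 2), hcount, zero_smul]

lemma mem_J_of_theta_eq_zero {r n : ℕ} (hn : n ≠ 0) {f : MvPolynomial (Fin r) (ZMod 2)}
    (hf : f.IsHomogeneous n) (hθ : Theta r n f = 0) : f ∈ J r := by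
  have hsupp : ∀ u ∈ f.support, u.degree = n ∧ u.support.Nonempty ∧ #u.support ≤ n := by
    intro u hu
    have hdeg : u.degree = n := by
      rw [Finsupp.degree_eq_weight_one]
      exact hf (mem_support_iff.mp hu)
    refine ⟨hdeg, Finsupp.support_nonempty_iff.mpr ?_, hdeg ▸ u.card_support_le_degree_s14⟩
    rintro rfl
    exact hn (by simpa using hdeg.symm)
  set g := ∑ u ∈ f.support, monomial (canonicalExp n u.support) (1 : ZMod 2)
  have hfg : f + g ∈ J r := by
    nth_rewrite 1 [eq_sum_monomial_one f]
    rw [← sum_add_distrib]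
    refine sum_mem fun u hu => monomial_add_monomial_mem_J ?_ ?_
    · rw [support_canonicalExp (hsupp u hu).2.2]
    · rw [degree_canonicalExp (hsupp u hu).2.1 (hsupp u hu).2.2, (hsupp u hu).1]
  have hg : g = 0 := by
    refine sum_monomial_canonicalExp_eq_zero hn (fun u hu => (hsupp u hu).2) ?_
    have hg_hom : g.IsHomogeneous n := IsHomogeneous.sum _ _ _ fun u hu =>
      isHomogeneous_monomial _ (degree_canonicalExp (hsupp u hu).2.1 (hsupp u hu).2.2)
    simpa [theta_add hn, hθ] using theta_eq_zero_of_mem_J hn (hf.add hg_hom) hfg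
  simpa [hg] using hfg

theorem stmt_14_general (r n : ℕ) (hn : 1 ≤ n)
    (f : MvPolynomial (Fin r) (ZMod 2)) (hf : f.IsHomogeneous n) :
    f ∈ J r ↔ Theta r n f = 0 :=
  ⟨theta_eq_zero_of_mem_J (by omega) hf, mem_J_of_theta_eq_zero (by omega) hf⟩

/-- A homogeneous polynomial `f` of degree `n ≥ 1` belongs to the ideal `J r` if and only if
`Θ n (f) = 0`: the canonical ideal of the elementary abelian 2-group of rank `r` is generated
by the elements `t i ^ 2 * t j + t i * t j ^ 2`. -/
theorem stmt_14 (r n : ℕ) (hr : 1 ≤ r) (hn : 1 ≤ n)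
    (f : MvPolynomial (Fin r) (ZMod 2)) (hf : f.IsHomogeneous n) :
    f ∈ J r ↔ Theta r n f = 0 :=
  stmt_14_general r n hn f hf
end
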